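/- arXiv:1701.08833 — 14 statements merged into one kernel-verified Lean document; each statement's English description precedes it below -/
import Mathlib

section
/- Let n ≥ 2 be an integer, let z, a, b be real numbers, and let x_1,…,x_n and y_1,…,y_n be real numbers. Let K be the (n+1)×(n+1) real matrix with rows and columns indexed by 0,1,…,n whose (0,0) entry is z, whose (0,j) entry is y_j and whose (i,0) entry is x_i for 1 ≤ i, j ≤ n, and whose (i,j) entry for 1 ≤ i, j ≤ n equals b if i = j and a if i ≠ j. Then det K = (b−a)^(n−2) · [ ((n−1)a + b) · ( z(b−a) − Σ_{j=1}^n x_j y_j ) + a · (Σ_{j=1}^n x_j) · (Σ_{j=1}^n y_j) ]. -/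
/-!
The rows of `K - (b - a) • 1` lie in the span of its first row, `e₀` and `(0, 1, …, 1)`, so it
factors through a `3`-dimensional space. Sylvester's determinant identity
`det (c • 1 + A * B) = c ^ (m - k) * det (c • 1 + B * A)`, obtained by evaluating
`charpoly_mul_comm_of_le` at `c`, then reduces `det K` to `(b - a) ^ (n - 2)` times a `3 × 3`
determinant.
-/

open Matrix Polynomial

theorem Matrix.det_scalar_add_mul_of_card_le {R m k : Type*} [CommRing R]
    [Fintype m] [DecidableEq m] [Fintype k] [DecidableEq k]
    (A : Matrix m k R) (B : Matrix k m R) (c : R) (hle : Fintype.card k ≤ Fintype.card m) :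
    (scalar m c + A * B).det = c ^ (Fintype.card m - Fintype.card k) * (scalar k c + B * A).det := by
  have h := congrArg (eval c) (charpoly_mul_comm_of_le (-A) B hle)
  simpa only [eval_mul, eval_pow, eval_X, eval_charpoly, Matrix.neg_mul, Matrix.mul_neg,
    sub_neg_eq_add] using h

section Bordered

variable {R : Type*} [CommRing R] {n : ℕ}

def borderLeft (a : R) (x : Fin n → R) : Matrix (Fin 3) (Fin (n + 1)) R :=
  of ![vecCons 1 0, vecCons 0 x, vecCons 0 fun _ => a]

def borderRight (z c : R) (y : Fin n → R) : Matrix (Fin 3) (Fin (n + 1)) R :=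
  of ![vecCons (z - c) y, vecCons 1 0, vecCons 0 1]

theorem eq_scalar_add_borderLeft_transpose_mul_borderRight (z a b : R) (x y : Fin n → R)
    (K : Matrix (Fin (n + 1)) (Fin (n + 1)) R)
    (hK00 : K 0 0 = z)
    (hK0j : ∀ j : Fin n, K 0 j.succ = y j)
    (hKi0 : ∀ i : Fin n, K i.succ 0 = x i)
    (hKij : ∀ i j : Fin n, K i.succ j.succ = if i = j then b else a) :
    K = scalar _ (b - a) + (borderLeft a x)ᵀ * borderRight z (b - a) y := by
  ext i j
  induction i using Fin.cases <;> induction j using Fin.cases <;>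
    simp [borderLeft, borderRight, Matrix.mul_apply, Fin.sum_univ_succ, diagonal_apply,
      hK00, hK0j, hKi0, hKij, (Fin.succ_ne_zero _).symm, ite_add]

theorem borderRight_mul_borderLeft_transpose (z a c : R) (x y : Fin n → R) :
    borderRight z c y * (borderLeft a x)ᵀ =
      !![z - c, ∑ j, y j * x j, a * ∑ j, y j; 1, 0, 0; 0, ∑ j, x j, n * a] := by
  ext i j
  fin_cases i <;> fin_cases j <;>
    simp [borderLeft, borderRight, Matrix.mul_apply, Fin.sum_univ_succ, Finset.mul_sum, mul_comm]

end Bordered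

/-- Closed form of the determinant `𝕂(n; z; x₁,…,xₙ; y₁,…,yₙ; a; b)`. -/
theorem stmt_0 (n : ℕ) (hn : 2 ≤ n) (z a b : ℝ) (x y : Fin n → ℝ)
    (K : Matrix (Fin (n + 1)) (Fin (n + 1)) ℝ)
    (hK00 : K 0 0 = z)
    (hK0j : ∀ j : Fin n, K 0 j.succ = y j)
    (hKi0 : ∀ i : Fin n, K i.succ 0 = x i)
    (hKij : ∀ i j : Fin n, K i.succ j.succ = if i = j then b else a) :
    K.det = (b - a) ^ (n - 2) *
      ((((n : ℝ) - 1) * a + b) * (z * (b - a) - ∑ j, x j * y j)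
        + a * (∑ j, x j) * (∑ j, y j)) := by
  rw [eq_scalar_add_borderLeft_transpose_mul_borderRight z a b x y K hK00 hK0j hKi0 hKij,
    det_scalar_add_mul_of_card_le _ _ _ (by simpa using hn),
    borderRight_mul_borderLeft_transpose, Fintype.card_fin, Fintype.card_fin,
    show n + 1 - 3 = n - 2 by omega]
  congr 1
  simp only [det_fin_three, scalar_apply, Matrix.add_apply, diagonal_apply_eq, diagonal_apply_ne,
    of_apply, cons_val', cons_val_zero, cons_val_one, cons_val, cons_val_fin_one, ne_eq,
    Fin.reduceEq, not_false_eq_true, mul_comm (x _)]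
  ring
end

section
/- Let n ≥ 3 be an integer, let u > 0 and let v_1,…,v_n be real numbers. Let C be the (n+2)×(n+2) real matrix with rows and columns indexed by −1,0,1,…,n defined by: C(−1,−1) = 0; C(−1,j) = C(i,−1) = 1 for all i, j ∈ {0,…,n}; C(0,0) = 0; C(0,j) = C(j,0) = v_j for 1 ≤ j ≤ n; and for 1 ≤ i, j ≤ n, C(i,j) = 0 if i = j and C(i,j) = u if i ≠ j. Then det C = (−u)^(n−2) · [ n(u² + v_1² + ⋯ + v_n²) − (u + v_1 + ⋯ + v_n)² ]. -/
/-- The Cayley–Menger determinant of the `n`-pre-kite `PK[n; u; v₁,…,vₙ]`.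
The matrix `C` is indexed by `Fin (n+2)`, where index `0` plays the role of
the bordering index `−1`, index `1` plays the role of the vertex index `0`
(the apex), and index `j.succ.succ` (for `j : Fin n`) plays the role of the
vertex index `j+1`. -/
theorem stmt_1 (n : ℕ) (hn : 3 ≤ n) (u : ℝ) (hu : 0 < u) (v : Fin n → ℝ)
    (C : Matrix (Fin (n + 2)) (Fin (n + 2)) ℝ)
    (hC00 : C 0 0 = 0)
    (hCborder : ∀ i : Fin (n + 1), C 0 i.succ = 1 ∧ C i.succ 0 = 1)
    (hC11 : C 1 1 = 0)
    (hCv : ∀ j : Fin n, C 1 j.succ.succ = v j ∧ C j.succ.succ 1 = v j)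
    (hCin : ∀ i j : Fin n, C i.succ.succ j.succ.succ = if i = j then 0 else u) :
    C.det = (-u) ^ (n - 2) *
      ((n : ℝ) * (u ^ 2 + ∑ j, v j ^ 2) - (u + ∑ j, v j) ^ 2) := by
  have hu0 : u ≠ 0 := ne_of_gt hu
  set S : ℝ := ∑ j, v j with hS
  set Q : ℝ := ∑ j, v j ^ 2 with hQ
  -- the equivalence Fin 2 ⊕ Fin n ≃ Fin (n+2)
  let e : Fin 2 ⊕ Fin n ≃ Fin (n + 2) :=
    finSumFinEquiv.trans (finCongr (by omega))
  have he_inl : ∀ i : Fin 2, (e (Sum.inl i) : ℕ) = (i : ℕ) := by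
    intro i; simp [e]
  have he_inr : ∀ j : Fin n, (e (Sum.inr j) : ℕ) = (j : ℕ) + 2 := by
    intro j; simp [e]
  -- blocks
  let A : Matrix (Fin 2) (Fin 2) ℝ := !![0, 1; 1, 0]
  let B : Matrix (Fin 2) (Fin n) ℝ := Matrix.of fun i j => if i = 0 then 1 else v j
  let Ct : Matrix (Fin n) (Fin 2) ℝ := Matrix.of fun j i => if i = 0 then 1 else v j
  let D : Matrix (Fin n) (Fin n) ℝ := Matrix.of fun i j => if i = j then (0:ℝ) else u
  have hsub : C.submatrix e e = Matrix.fromBlocks A B Ct D := by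
    ext i j
    have h1 : (e (Sum.inl 1)) = (1 : Fin (n+2)) := by
      apply Fin.ext; rw [he_inl]; simp [Fin.val_one]
    have h0 : (e (Sum.inl 0)) = (0 : Fin (n+2)) := by
      apply Fin.ext; rw [he_inl]; rfl
    have hr : ∀ j : Fin n, e (Sum.inr j) = (j.succ.succ : Fin (n+2)) := by
      intro j; apply Fin.ext; rw [he_inr]; simp
    have hr1 : ∀ j : Fin n, e (Sum.inr j) = ((j.succ : Fin (n+1)).succ : Fin (n+2)) := by
      intro j; rw [hr]
    have h1' : (e (Sum.inl 1)) = (((0 : Fin (n+1))).succ : Fin (n+2)) := by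
      rw [h1]; rfl
    rcases i with i | i <;> rcases j with j | j
    · fin_cases i <;> fin_cases j <;>
        simp only [Matrix.submatrix_apply, Matrix.fromBlocks_apply₁₁,
          Fin.zero_eta, Fin.mk_one, Fin.isValue]
      · rw [h0, hC00]; simp [A]
      · rw [h0, h1', (hCborder 0).1]; simp [A]
      · rw [h0, h1', (hCborder 0).2]; simp [A]
      · rw [h1, hC11]; simp [A]
    · fin_cases i <;>
        simp only [Matrix.submatrix_apply, Matrix.fromBlocks_apply₁₂,
          Fin.zero_eta, Fin.mk_one, Fin.isValue]
      · rw [h0, hr1 j, (hCborder _).1]; simp [B]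
      · rw [h1, hr j, (hCv j).1]; simp [B]
    · fin_cases j <;>
        simp only [Matrix.submatrix_apply, Matrix.fromBlocks_apply₂₁,
          Fin.zero_eta, Fin.mk_one, Fin.isValue]
      · rw [h0, hr1 i, (hCborder _).2]; simp [Ct]
      · rw [h1, hr i, (hCv i).2]; simp [Ct]
    · simp only [Matrix.submatrix_apply, Matrix.fromBlocks_apply₂₂]
      rw [hr i, hr j, hCin i j]; rfl
  have hdet1 : C.det = (Matrix.fromBlocks A B Ct D).det := by
    rw [← hsub, Matrix.det_submatrix_equiv_self]
  -- A is its own inverse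
  have hAA : A * A = 1 := by
    ext i j; fin_cases i <;> fin_cases j <;>
      simp [A, Matrix.mul_apply, Fin.sum_univ_two]
  haveI : Invertible A := ⟨A, hAA, hAA⟩
  have hinvA : ⅟A = A := invOf_eq_right_inv hAA
  rw [hdet1, Matrix.det_fromBlocks₁₁, hinvA]
  have hdetA : A.det = -1 := by simp [A, Matrix.det_fin_two]
  -- the Schur complement as -u • (1 + U * V)
  let U : Matrix (Fin n) (Fin 2) ℝ := Matrix.of fun j i => if i = 0 then v j / u else 1
  let V : Matrix (Fin 2) (Fin n) ℝ := Matrix.of fun i j => if i = 0 then 1 else (v j - u) / u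
  have hV0 : ∀ j, V 0 j = 1 := fun j => by simp [V]
  have hV1 : ∀ j, V 1 j = (v j - u) / u := fun j => by simp [V]
  have hU0 : ∀ j, U j 0 = v j / u := fun j => by simp [U]
  have hU1 : ∀ j, U j 1 = 1 := fun j => by simp [U]
  have hschur : D - Ct * A * B = (-u) • (1 + U * V) := by
    ext i j
    have hCA : (Ct * A * B) i j = v i + v j := by
      simp [Matrix.mul_apply, Fin.sum_univ_two, Ct, A, B]
    have hUV : (U * V) i j = v i / u + (v j - u) / u := by
      simp [Matrix.mul_apply, Fin.sum_univ_two, U, V]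
    simp only [Matrix.sub_apply, Matrix.smul_apply, Matrix.add_apply, hCA, hUV,
      D, Matrix.of_apply, smul_eq_mul]
    rcases eq_or_ne i j with h | h
    · subst h
      rw [if_pos rfl, Matrix.one_apply_eq]
      field_simp
      ring
    · rw [if_neg h, Matrix.one_apply_ne h]
      field_simp
      ring
  rw [hschur, Matrix.det_smul, Matrix.det_one_add_mul_comm]
  -- compute the 2×2 determinant
  have e00 : (V * U) 0 0 = S / u := by
    rw [Matrix.mul_apply]
    simp only [hV0, hU0, one_mul]
    rw [hS, Finset.sum_div]
  have e01 : (V * U) 0 1 = (n : ℝ) := by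
    rw [Matrix.mul_apply]
    simp [hV0, hU1]
  have e10 : (V * U) 1 0 = (Q - u * S) / u ^ 2 := by
    rw [Matrix.mul_apply]
    calc (∑ j, V 1 j * U j 0) = ∑ j, (v j ^ 2 - u * v j) / u ^ 2 := by
          refine Finset.sum_congr rfl fun j _ => ?_
          rw [hV1, hU0]; field_simp
      _ = (Q - u * S) / u ^ 2 := by
          rw [hQ, hS, Finset.mul_sum, ← Finset.sum_sub_distrib, Finset.sum_div]
  have e11 : (V * U) 1 1 = (S - n * u) / u := by
    rw [Matrix.mul_apply]
    calc (∑ j, V 1 j * U j 1) = ∑ j, (v j / u - 1) := by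
          refine Finset.sum_congr rfl fun j _ => ?_
          rw [hV1, hU1]; field_simp
      _ = (S - n * u) / u := by
          rw [Finset.sum_sub_distrib, ← Finset.sum_div, ← hS, Finset.sum_const,
            Finset.card_univ, Fintype.card_fin, nsmul_eq_mul, mul_one]
          field_simp
  have hdet2 : (1 + V * U).det =
      (1 + S / u) * (1 + (S - n * u) / u) - (n : ℝ) * ((Q - u * S) / u ^ 2) := by
    rw [Matrix.det_fin_two]
    simp only [Matrix.add_apply, Matrix.one_apply_eq,
      Matrix.one_apply_ne (show (0 : Fin 2) ≠ 1 by decide),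
      Matrix.one_apply_ne (show (1 : Fin 2) ≠ 0 by decide), e00, e01, e10, e11]
    ring
  rw [hdet2, hdetA, Fintype.card_fin]
  -- final algebra
  have hn2 : n - 2 + 2 = n := by omega
  have hpow : (-u) ^ n = (-u) ^ (n - 2) * u ^ 2 := by
    rw [← hn2, pow_add]; congr 1; ring
  rw [hpow]
  field_simp
  ring
end

section
/- Let n ≥ 3 be an integer, let u > 0 and let v_1,…,v_n be real numbers. Let D be the (n+1)×(n+1) real matrix with rows and columns indexed by 0,1,…,n defined by: D(0,0) = 0; D(0,j) = D(j,0) = v_j for 1 ≤ j ≤ n; and for 1 ≤ i, j ≤ n, D(i,j) = 0 if i = j and D(i,j) = u if i ≠ j. Then det D = (−u)^(n−1) · [ (n−1)(v_1² + ⋯ + v_n²) − (v_1 + ⋯ + v_n)² ]. -/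
/-!
Move the apex index last, so that `D` becomes the bordered matrix `[[A, v], [vᵀ, 0]]` with
`A = u (J - I)`. If `A x = v`, subtracting from the border column the columns of `A` weighted by
`x` makes the matrix block triangular, so `det D = - det A * (v ⬝ᵥ x)`. The matrix determinant
lemma gives `det A = (-u)ⁿ (1 - n)`, and `x i = (S / (n - 1) - v i) / u` with `S = ∑ j, v j`
solves `A x = v` because `A x = u (∑ x) 𝟙 - u x`.
-/

open Matrix

namespace Matrix

variable {m ι R : Type*} [Fintype m] [DecidableEq m] [Unique ι] [CommRing R]

theorem det_fromBlocks_replicateCol_of_mulVec_eq (A : Matrix m m R) (b c x : m → R) (d : R)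
    (hx : A *ᵥ x = c) :
    (fromBlocks A (replicateCol ι c) (replicateRow ι b) (of fun _ _ => d)).det
      = A.det * (d - b ⬝ᵥ x) := by
  have hA : A * replicateCol ι x = replicateCol ι c := by
    ext i j; simp [replicateCol, mul_apply, ← hx, mulVec, dotProduct]
  have hb : replicateRow ι b * replicateCol ι x = of fun _ _ => b ⬝ᵥ x := by
    ext i j; simp [mul_apply, dotProduct]
  have hcolumn_op : fromBlocks A (replicateCol ι c) (replicateRow ι b) (of fun _ _ => d)
      * fromBlocks 1 (-replicateCol ι x) 0 1
      = fromBlocks A 0 (replicateRow ι b) (of fun _ _ => d - b ⬝ᵥ x) := by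
    rw [fromBlocks_multiply, Matrix.mul_neg, Matrix.mul_neg, hA, hb]
    congr 1 <;> ext <;> simp [sub_eq_neg_add]
  have := congrArg det hcolumn_op
  rwa [det_mul, det_fromBlocks_zero₂₁, det_fromBlocks_zero₁₂, det_one, det_one, mul_one,
    mul_one, det_unique (of _)] at this

theorem det_of_ite_eq_zero_else (u : R) :
    (of fun i j : m => if i = j then 0 else u).det
      = (-u) ^ Fintype.card m * (1 - Fintype.card m) := by
  have h : (of fun i j : m => if i = j then 0 else u) = (-u) •
      (1 + replicateCol Unit (fun _ => (-1 : R)) * replicateRow Unit (fun _ => (1 : R))) := by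
    ext i j
    by_cases h : i = j <;> simp [h, mul_apply]
  rw [h, det_smul, det_one_add_replicateCol_mul_replicateRow]
  simp [dotProduct, sub_eq_add_neg]

theorem of_ite_eq_zero_else_mulVec {K : Type*} [Field K] {u : K} (hu : u ≠ 0)
    (hm : (Fintype.card m : K) ≠ 1) (v : m → K) :
    (of fun i j : m => if i = j then 0 else u) *ᵥ
      (fun i => ((∑ j, v j) / (Fintype.card m - 1) - v i) / u) = v := by
  have hm' : (Fintype.card m : K) - 1 ≠ 0 := sub_ne_zero.mpr hm
  ext i
  have hite : ∀ j, (if i = j then 0 else u) = u - if i = j then u else 0 := fun j => by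
    split_ifs <;> simp
  simp only [mulVec, dotProduct, of_apply, hite, sub_mul, Finset.sum_sub_distrib, ite_mul,
    zero_mul, Finset.sum_ite_eq, Finset.mem_univ, if_true, ← Finset.mul_sum, ← Finset.sum_div,
    Finset.sum_const, Finset.card_univ, nsmul_eq_mul]
  field_simp
  ring

theorem det_eq_det_fromBlocks_succ {n : ℕ} (D : Matrix (Fin (n + 1)) (Fin (n + 1)) R) :
    D.det = (fromBlocks (D.submatrix Fin.succ Fin.succ) (replicateCol Unit fun i => D i.succ 0)
      (replicateRow Unit fun j => D 0 j.succ) (of fun _ _ => D 0 0)).det := by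
  let e : Fin n ⊕ Unit ≃ Fin (n + 1) :=
    ((finSuccEquiv n).trans (Equiv.optionEquivSumPUnit _)).symm
  rw [← det_submatrix_equiv_self e]
  congr 1
  ext (i | i) (j | j) <;> simp [e]

end Matrix

/-- The inner Cayley–Menger determinant of the `n`-pre-kite `PK[n; u; v₁,…,vₙ]`.
The matrix `D` is indexed by `Fin (n+1)`, where index `0` is the apex vertex
and index `j.succ` (for `j : Fin n`) is the vertex index `j+1`. -/
theorem stmt_2 (n : ℕ) (hn : 3 ≤ n) (u : ℝ) (hu : 0 < u) (v : Fin n → ℝ)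
    (D : Matrix (Fin (n + 1)) (Fin (n + 1)) ℝ)
    (hD00 : D 0 0 = 0)
    (hDv : ∀ j : Fin n, D 0 j.succ = v j ∧ D j.succ 0 = v j)
    (hDin : ∀ i j : Fin n, D i.succ j.succ = if i = j then 0 else u) :
    D.det = (-u) ^ (n - 1) *
      (((n : ℝ) - 1) * (∑ j, v j ^ 2) - (∑ j, v j) ^ 2) := by
  have hA : D.submatrix Fin.succ Fin.succ = of fun i j => if i = j then 0 else u := by
    ext i j; exact hDin i j
  have hcol : (fun i => D i.succ 0) = v := funext fun j => (hDv j).2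
  have hrow : (fun j => D 0 j.succ) = v := funext fun j => (hDv j).1
  have hn1 : (n : ℝ) ≠ 1 := by norm_cast; omega
  have hsolve := of_ite_eq_zero_else_mulVec hu.ne' (by simpa using hn1) v
  rw [det_eq_det_fromBlocks_succ, hA, hcol, hrow, hD00,
    det_fromBlocks_replicateCol_of_mulVec_eq _ _ _ _ _ hsolve, det_of_ite_eq_zero_else]
  have hdot : v ⬝ᵥ (fun i => ((∑ j, v j) / ((Fintype.card (Fin n) : ℝ) - 1) - v i) / u)
      = ((∑ j, v j) ^ 2 / (n - 1) - ∑ j, v j ^ 2) / u := by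
    simp only [dotProduct, mul_div_assoc', mul_sub, ← Finset.sum_div, Finset.sum_sub_distrib,
      ← Finset.sum_mul, Fintype.card_fin, sq]
  have hn1' : (n : ℝ) - 1 ≠ 0 := sub_ne_zero.mpr hn1
  rw [hdot, Fintype.card_fin, ← pow_sub_one_mul (by omega : n ≠ 0) (-u)]
  field_simp
  ring
end

section
/- Let n ≥ 3 be an integer, let u > 0 and let v_1,…,v_n be real numbers, and set α = u + v_1 + ⋯ + v_n and β = u² + v_1² + ⋯ + v_n². For a list of squared edge lengths (w_1,…,w_{n−1}) together with a common value w, let CM(w; w_1,…,w_{n−1}) denote the determinant of the (n+1)×(n+1) matrix with a bordering row and column of 1's (with 0 in the corner), with (0,0) entry 0, with (0,j) and (j,0) entries w_j for 1 ≤ j ≤ n−1, and with (i,j) entry equal to 0 if i = j and w otherwise for 1 ≤ i, j ≤ n−1. Then CM(u; u,…,u) = (−1)^n · n · u^(n−1), and for each j with 1 ≤ j ≤ n, CM(u; v_1,…,v_{j−1},v_{j+1},…,v_n) = (−u)^(n−3) · [ −α² + (n−1)β − n v_j² + 2α v_j ]. -/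
/-- `CM n w ws` is the Cayley–Menger determinant of an `(n-1)`-simplex whose
squared edge lengths from the first vertex are `ws 1, …, ws (n-1)` and whose
remaining squared edge lengths all equal `w`.  The `(n+1) × (n+1)` matrix is
indexed by `Fin (n+1)`: index `0` is the bordering index (row and column of
`1`'s with `0` in the corner), index `1` is the first vertex, and indices
`2, …, n` are the vertices `1, …, n-1`. -/
noncomputable def CM (n : ℕ) (w : ℝ) (ws : ℕ → ℝ) : ℝ :=
  Matrix.det (Matrix.of fun i j : Fin (n + 1) =>
    if i.val = 0 then (if j.val = 0 then 0 else 1)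
    else if j.val = 0 then 1
    else if i.val = 1 then (if j.val = 1 then 0 else ws (j.val - 1))
    else if j.val = 1 then ws (i.val - 1)
    else if i = j then 0 else w)

/-! The Cayley–Menger matrix is a block matrix whose top-left block `!![0, 1; 1, 0]` (border
and first vertex) is invertible. Its Schur complement is `U * V - w • 1` with
`U : Matrix (Fin m) (Fin 2)` built from the border and the edge lengths `ws`, so Sylvester's
identity `det (t • 1 - U * V) = t ^ (m - 2) * det (t • 1 - V * U)` (an identity of characteristic
polynomials, hence valid also at `t = 0`) reduces the determinant to a `2 × 2` one in the sums
`∑ ws k` and `∑ ws k ^ 2`. For the facets, deleting `v j` from these sums gives `α - u - v j` and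
`β - u ^ 2 - v j ^ 2`. -/

open Matrix Finset

theorem Matrix.det_scalar_sub_mul_of_card_le {m n R : Type*} [Fintype m] [Fintype n]
    [DecidableEq m] [DecidableEq n] [CommRing R] (U : Matrix m n R) (V : Matrix n m R)
    (h : Fintype.card n ≤ Fintype.card m) (t : R) :
    (scalar m t - U * V).det =
      t ^ (Fintype.card m - Fintype.card n) * (scalar n t - V * U).det := by
  rw [← eval_charpoly, ← eval_charpoly, charpoly_mul_comm_of_le U V h, Polynomial.eval_mul,
    Polynomial.eval_pow, Polynomial.eval_X]

theorem Matrix.det_fromBlocks_swap₁₁ {n R : Type*} [Fintype n] [DecidableEq n] [CommRing R]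
    (B : Matrix (Fin 2) n R) (C : Matrix n (Fin 2) R) (D : Matrix n n R) :
    (fromBlocks !![0, 1; 1, 0] B C D).det = -(D - C * !![(0 : R), 1; 1, 0] * B).det := by
  have hinv : !![(0 : R), 1; 1, 0] * !![0, 1; 1, 0] = 1 := by
    rw [mul_fin_two, one_fin_two]; simp
  have := invertibleOfLeftInverse _ _ hinv
  rw [det_fromBlocks₁₁, invOf_eq_left_inv hinv, det_fin_two_of]
  ring

theorem CM_succ_eq_det_fromBlocks (m : ℕ) (w : ℝ) (ws : ℕ → ℝ) :
    CM (m + 1) w ws =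
      (fromBlocks !![0, 1; 1, 0] (of ![1, fun k : Fin m => ws (k + 1)])
        (of ![1, fun k : Fin m => ws (k + 1)])ᵀ (of fun k l => if k = l then 0 else w)).det := by
  let e : Fin 2 ⊕ Fin m ≃ Fin (m + 1 + 1) := finSumFinEquiv.trans (finCongr (by omega))
  have he₀ : (e (.inl 0)).val = 0 := rfl
  have he₁ : (e (.inl 1)).val = 1 := rfl
  have he : ∀ k : Fin m, (e (.inr k)).val = k.val + 2 := fun k => by simp [e]
  have hz : ∀ x, e x = 0 ↔ (e x).val = 0 := fun x => Fin.ext_iff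
  rw [CM, ← det_submatrix_equiv_self e]
  congr 1
  ext (i | k) (j | l)
  · fin_cases i <;> fin_cases j <;> rfl
  · fin_cases i <;> simp [hz, he₀, he₁, he l]
  · fin_cases j <;> simp [hz, he₀, he₁, he k]
  · simp [hz, he k, he l]

theorem Fin.sum_univ_eq_sum_Icc_one {M : Type*} [AddCommMonoid M] (m : ℕ) (f : ℕ → M) :
    ∑ k : Fin m, f (k + 1) = ∑ k ∈ Icc 1 m, f k := by
  rw [Fin.sum_univ_eq_sum_range (fun k => f (k + 1)), range_eq_Ico, sum_Ico_add',
    Ico_add_one_right_eq_Icc, zero_add]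

theorem CM_succ (m : ℕ) (hm : 2 ≤ m) (w : ℝ) (ws : ℕ → ℝ) :
    CM (m + 1) w ws = (-w) ^ (m - 2) *
      (m * (w ^ 2 + ∑ k ∈ Icc 1 m, ws k ^ 2) - (w + ∑ k ∈ Icc 1 m, ws k) ^ 2) := by
  set x : Fin m → ℝ := fun k => ws (k + 1)
  let V : Matrix (Fin 2) (Fin m) ℝ := of ![fun l => w - x l, -1]
  have hschur : of (fun k l => if k = l then 0 else w) -
      (of ![1, x])ᵀ * !![(0 : ℝ), 1; 1, 0] * of ![1, x] =
        -(scalar (Fin m) w - (of ![1, x])ᵀ * V) := by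
    ext k l
    by_cases hkl : k = l <;> simp [V, mul_apply, Fin.sum_univ_two, hkl] <;> ring
  have hVU : V * (of ![1, x])ᵀ =
      !![m * w - ∑ k, x k, w * ∑ k, x k - ∑ k, x k ^ 2; -m, -∑ k, x k] := by
    ext i j
    fin_cases i <;> fin_cases j <;> simp [V, mul_apply, sum_sub_distrib, mul_sum, sub_mul, sq]
  rw [CM_succ_eq_det_fromBlocks, det_fromBlocks_swap₁₁, hschur, det_neg,
    det_scalar_sub_mul_of_card_le _ V (by simpa), hVU, ← Fin.sum_univ_eq_sum_Icc_one m ws,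
    ← Fin.sum_univ_eq_sum_Icc_one m (fun k => ws k ^ 2)]
  obtain ⟨p, rfl⟩ : ∃ p, m = p + 2 := ⟨m - 2, by omega⟩
  simp [x, det_fin_two]
  ring

theorem Finset.sum_Icc_skip_add {M : Type*} [AddCommMonoid M] (f : ℕ → M) {m j : ℕ}
    (hj₁ : 1 ≤ j) (hj₂ : j ≤ m + 1) :
    ∑ k ∈ Icc 1 m, (if k < j then f k else f (k + 1)) + f j = ∑ k ∈ Icc 1 (m + 1), f k := by
  induction m with
  | zero =>
    obtain rfl : j = 1 := by omega
    simp
  | succ m ih =>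
    rw [sum_Icc_succ_top (by omega), sum_Icc_succ_top (by omega) f]
    rcases hj₂.lt_or_eq with hj | rfl
    · rw [if_neg (by omega), add_right_comm, ih (by omega)]
    · rw [if_pos (by omega), sum_congr rfl fun k hk => if_pos (by grind),
        ← sum_Icc_succ_top (by omega) f]

theorem stmt_3_general (n : ℕ) (hn : 3 ≤ n) (u : ℝ) (v : ℕ → ℝ)
    (α β : ℝ)
    (hα : α = u + ∑ j ∈ Finset.Icc 1 n, v j)
    (hβ : β = u ^ 2 + ∑ j ∈ Finset.Icc 1 n, v j ^ 2) :
    CM n u (fun _ => u) = (-1) ^ n * n * u ^ (n - 1) ∧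
    ∀ j, 1 ≤ j → j ≤ n →
      CM n u (fun k => if k < j then v k else v (k + 1)) =
        (-u) ^ (n - 3) *
          (-α ^ 2 + ((n : ℝ) - 1) * β - (n : ℝ) * v j ^ 2 + 2 * α * v j) := by
  obtain ⟨m, rfl⟩ : ∃ m, n = m + 1 := ⟨n - 1, by omega⟩
  refine ⟨?_, fun j hj₁ hj₂ => ?_⟩
  · obtain ⟨p, rfl⟩ : ∃ p, m = p + 2 := ⟨m - 2, by omega⟩
    rw [CM_succ _ (by omega)]
    simp only [sum_const, Nat.card_Icc, nsmul_eq_mul]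
    push_cast
    ring
  · have hS := sum_Icc_skip_add v hj₁ hj₂
    have hQ := sum_Icc_skip_add (fun k => v k ^ 2) hj₁ hj₂
    rw [CM_succ m (by omega), show m + 1 - 3 = m - 2 by omega]
    simp only [apply_ite (· ^ 2)]
    rw [hα, hβ, ← hS, ← hQ]
    push_cast
    ring

/-- Formulas for the Cayley–Menger determinants of the facets of the
`n`-pre-kite `PK[n; u; v₁,…,vₙ]`:  the `0`-th facet is the regular
`(n-1)`-simplex with all squared edge lengths `u`, and the `j`-th facet
(for `1 ≤ j ≤ n`) has edge-length data `(u; v₁,…,v_{j-1},v_{j+1},…,vₙ)`. -/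
theorem stmt_3 (n : ℕ) (hn : 3 ≤ n) (u : ℝ) (hu : 0 < u) (v : ℕ → ℝ)
    (α β : ℝ)
    (hα : α = u + ∑ j ∈ Finset.Icc 1 n, v j)
    (hβ : β = u ^ 2 + ∑ j ∈ Finset.Icc 1 n, v j ^ 2) :
    CM n u (fun _ => u) = (-1) ^ n * n * u ^ (n - 1) ∧
    ∀ j, 1 ≤ j → j ≤ n →
      CM n u (fun k => if k < j then v k else v (k + 1)) =
        (-u) ^ (n - 3) *
          (-α ^ 2 + ((n : ℝ) - 1) * β - (n : ℝ) * v j ^ 2 + 2 * α * v j) :=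
  stmt_3_general n hn u v α β hα hβ
end

section
/- Let n ≥ 3 be an integer, let u > 0 and let v_1,…,v_n be real numbers, and set α = u + v_1 + ⋯ + v_n and β = u² + v_1² + ⋯ + v_n². For squared edge lengths (w_1,…,w_{n−1}) together with a common value w, let ICM(w; w_1,…,w_{n−1}) denote the determinant of the n×n matrix with (1,1) entry 0, with (1,j) and (j,1) entries w_{j−1} for 2 ≤ j ≤ n, and with (i,j) entry equal to 0 if i = j and w otherwise for 2 ≤ i, j ≤ n. Then ICM(u; u,…,u) = (−1)^(n+1) · (n−1) · u^n, and for each j with 1 ≤ j ≤ n, ICM(u; v_1,…,v_{j−1},v_{j+1},…,v_n) = (−u)^(n−2) · [ (n−2)β − α² + 2αu − (n−1)u² − (n−1)v_j² + 2α v_j − 2u v_j ]. -/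
/-!
After moving the first vertex into a `1 × 1` block, the inner Cayley–Menger matrix becomes the
bordered matrix `[[0, aᵀ], [a, D]]` with `D = w • (J - 1)`, where `J` is the all-ones `k × k`
matrix. Since `J * J = k • J`, `D` has the explicit inverse `w⁻¹ • ((k - 1)⁻¹ • J - 1)` and
determinant `(-w) ^ k * (1 - k)`, so the Schur complement `-aᵀ D⁻¹ a` gives
`det = (-w) ^ k / w * ((∑ a) ^ 2 - (k - 1) * ∑ a ^ 2)`.
For the facets of the pre-kite, `∑ a` and `∑ a ^ 2` are `α` and `β` with `u` and `v j` removed.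
-/

/-- `ICM n w ws` is the inner Cayley–Menger determinant of an `(n-1)`-simplex
whose squared edge lengths from the first vertex are `ws 1, …, ws (n-1)` and
whose remaining squared edge lengths all equal `w`.  The `n × n` matrix is
indexed by `Fin n`: index `0` is the first vertex (paper index `1`) and
indices `1, …, n-1` are the vertices with paper indices `2, …, n`. -/
noncomputable def ICM (n : ℕ) (w : ℝ) (ws : ℕ → ℝ) : ℝ :=
  Matrix.det (Matrix.of fun i j : Fin n =>
    if i.val = 0 then (if j.val = 0 then 0 else ws j.val)
    else if j.val = 0 then ws i.val
    else if i = j then 0 else w)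

open Matrix Finset

namespace Matrix

variable {ι : Type*} [Fintype ι] [DecidableEq ι]

def offDiagConst {R : Type*} [Zero R] (w : R) : Matrix ι ι R :=
  of fun i j => if i = j then 0 else w

section CommRing

variable {R : Type*} [CommRing R]

omit [Fintype ι] in
theorem offDiagConst_eq_smul (w : R) :
    (offDiagConst w : Matrix ι ι R) = w • (of (fun _ _ => 1) - 1) := by
  ext i j
  by_cases h : i = j <;> simp [offDiagConst, h]

omit [DecidableEq ι] in
theorem of_one_mul_of_one :
    (of (fun _ _ => 1) : Matrix ι ι R) * of (fun _ _ => 1) =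
      (Fintype.card ι : R) • of (fun _ _ => 1) := by
  ext i j
  simp [mul_apply]

theorem det_offDiagConst (w : R) :
    (offDiagConst w : Matrix ι ι R).det = (-w) ^ Fintype.card ι * (1 - Fintype.card ι) := by
  have h : (offDiagConst w : Matrix ι ι R) = (-w) • (1 + vecMulVec (-1) 1) := by
    ext i j
    by_cases h : i = j <;> simp [offDiagConst, h]
  rw [h, det_smul, vecMulVec_eq (Fin 1), det_one_add_mul_comm]
  simp [sub_eq_add_neg]

end CommRing

variable {K : Type*} [Field K]

theorem offDiagConst_mul_eq_one {w : K} (hw : w ≠ 0) (hι : (Fintype.card ι : K) ≠ 1) :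
    (offDiagConst w : Matrix ι ι K) *
      (w⁻¹ • (((Fintype.card ι : K) - 1)⁻¹ • of (fun _ _ => 1) - 1)) = 1 := by
  have hc : (Fintype.card ι : K) - 1 ≠ 0 := sub_ne_zero.mpr hι
  rw [offDiagConst_eq_smul, smul_mul_smul_comm, mul_inv_cancel₀ hw, one_smul, sub_mul, mul_sub,
    mul_sub, mul_smul_comm, of_one_mul_of_one, smul_smul, Matrix.mul_one, Matrix.one_mul,
    Matrix.mul_one]
  have hcoeff :
      ((Fintype.card ι : K) - 1)⁻¹ * Fintype.card ι = 1 + ((Fintype.card ι : K) - 1)⁻¹ := by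
    field_simp
    ring
  rw [hcoeff]
  module

theorem det_fromBlocks_zero_offDiagConst {w : K} (hw : w ≠ 0) (hι : (Fintype.card ι : K) ≠ 1)
    (a : ι → K) :
    (fromBlocks (0 : Matrix (Fin 1) (Fin 1) K) (replicateRow (Fin 1) a) (replicateCol (Fin 1) a)
        (offDiagConst w)).det =
      (-w) ^ Fintype.card ι / w *
        ((∑ i, a i) ^ 2 - ((Fintype.card ι : K) - 1) * ∑ i, a i ^ 2) := by
  let := invertibleOfRightInverse _ _ (offDiagConst_mul_eq_one hw hι)
  have hschur : (replicateRow (Fin 1) a * ⅟(offDiagConst w : Matrix ι ι K) *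
      replicateCol (Fin 1) a) 0 0 =
      w⁻¹ * (((Fintype.card ι : K) - 1)⁻¹ * (∑ i, a i) ^ 2 - ∑ i, a i ^ 2) := by
    rw [invOf_eq_right_inv (offDiagConst_mul_eq_one hw hι)]
    simp only [mul_apply, replicateRow_apply, replicateCol_apply, smul_apply, sub_apply, of_apply,
      one_apply, smul_eq_mul, mul_one, mul_sub, sub_mul, mul_ite, mul_zero, Finset.sum_sub_distrib,
      Finset.sum_ite_eq', Finset.mem_univ, if_true, ← Finset.sum_mul, ← Finset.mul_sum]
    rw [show ∑ i, a i * w⁻¹ * a i = w⁻¹ * ∑ i, a i ^ 2 by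
      rw [Finset.mul_sum]; exact Finset.sum_congr rfl fun i _ => by ring]
    ring
  rw [det_fromBlocks₂₂, det_offDiagConst, det_fin_one, sub_apply, zero_apply, hschur]
  field_simp
  ring

end Matrix

theorem sum_Ico_skip {M : Type*} [AddCommGroup M] (f : ℕ → M) {j n : ℕ} (hj : 1 ≤ j)
    (hjn : j ≤ n) :
    ∑ k ∈ Ico 1 n, (if k < j then f k else f (k + 1)) = ∑ k ∈ Icc 1 n, f k - f j := by
  induction n, hjn using Nat.le_induction with
  | base =>
    rw [← Ico_add_one_right_eq_Icc, sum_Ico_succ_top hj, add_sub_cancel_right]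
    exact sum_congr rfl fun k hk => if_pos (mem_Ico.mp hk).2
  | succ n hjn ih =>
    rw [sum_Ico_succ_top (by omega), ih, if_neg (by omega), sum_Icc_succ_top (by omega)]
    abel

theorem ICM_add_two {m : ℕ} (hm : m ≠ 0) {w : ℝ} (hw : w ≠ 0) (ws : ℕ → ℝ) :
    ICM (m + 2) w ws =
      -(-w) ^ m * ((∑ i ∈ Ico 1 (m + 2), ws i) ^ 2 - m * ∑ i ∈ Ico 1 (m + 2), ws i ^ 2) := by
  let e : Fin 1 ⊕ Fin (m + 1) ≃ Fin (m + 2) := finSumFinEquiv.trans (finCongr (by omega))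
  have he_inl (i : Fin 1) : (e (Sum.inl i) : ℕ) = 0 := by simp [e]
  have he_inr (k : Fin (m + 1)) : (e (Sum.inr k) : ℕ) = k + 1 := by simp [e]
  have hblocks : (of fun i j : Fin (m + 2) =>
      if i.val = 0 then (if j.val = 0 then 0 else ws j.val)
      else if j.val = 0 then ws i.val
      else if i = j then 0 else w).submatrix e e =
      fromBlocks 0 (replicateRow (Fin 1) fun k : Fin (m + 1) => ws (k + 1))
        (replicateCol (Fin 1) fun k : Fin (m + 1) => ws (k + 1)) (offDiagConst w) := by
    ext (x | x) (y | y) <;>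
      simp [he_inl, he_inr, -Fin.val_eq_zero_iff, offDiagConst, e.apply_eq_iff_eq]
  have hcard : ((Fintype.card (Fin (m + 1)) : ℕ) : ℝ) ≠ 1 := by simpa using hm
  have hsum (f : ℕ → ℝ) : ∑ k : Fin (m + 1), f (k + 1) = ∑ i ∈ Ico 1 (m + 2), f i := by
    rw [Fin.sum_univ_eq_sum_range (fun k => f (k + 1)), range_eq_Ico, sum_Ico_add']
  rw [ICM, ← det_submatrix_equiv_self e, hblocks, det_fromBlocks_zero_offDiagConst hw hcard,
    hsum, hsum (fun i => ws i ^ 2), Fintype.card_fin]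
  push_cast
  field_simp
  ring

/-- Formulas for the inner Cayley–Menger determinants of the facets of the
`n`-pre-kite `PK[n; u; v₁,…,vₙ]`:  the `0`-th facet is the regular
`(n-1)`-simplex with all squared edge lengths `u`, and the `j`-th facet
(for `1 ≤ j ≤ n`) has edge-length data `(u; v₁,…,v_{j-1},v_{j+1},…,vₙ)`. -/
theorem stmt_4 (n : ℕ) (hn : 3 ≤ n) (u : ℝ) (hu : 0 < u) (v : ℕ → ℝ)
    (α β : ℝ)
    (hα : α = u + ∑ j ∈ Finset.Icc 1 n, v j)
    (hβ : β = u ^ 2 + ∑ j ∈ Finset.Icc 1 n, v j ^ 2) :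
    ICM n u (fun _ => u) = (-1) ^ (n + 1) * ((n : ℝ) - 1) * u ^ n ∧
    ∀ j, 1 ≤ j → j ≤ n →
      ICM n u (fun k => if k < j then v k else v (k + 1)) =
        (-u) ^ (n - 2) *
          (((n : ℝ) - 2) * β - α ^ 2 + 2 * α * u - ((n : ℝ) - 1) * u ^ 2
            - ((n : ℝ) - 1) * v j ^ 2 + 2 * α * v j - 2 * u * v j) := by
  obtain ⟨m, rfl⟩ : ∃ m, n = m + 2 := ⟨n - 2, by omega⟩
  have hm : m ≠ 0 := by omega
  refine ⟨?_, fun j hj hjn => ?_⟩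
  · rw [ICM_add_two hm hu.ne']
    simp only [sum_const, Nat.card_Ico, nsmul_eq_mul, neg_pow u]
    push_cast
    ring
  · rw [ICM_add_two hm hu.ne', sum_Ico_skip v hj hjn]
    simp only [ite_pow]
    rw [sum_Ico_skip (fun k => v k ^ 2) hj hjn, Nat.add_sub_cancel, hα, hβ]
    push_cast
    ring
end

section
/- Let n ≥ 2, let A_1,…,A_{n+1} be the vertices of a regular n-simplex in a Euclidean space with edge length t_0 (so the points are affinely independent and ‖A_i − A_j‖ = t_0 for all i ≠ j), and let P be a point of the affine span of {A_1,…,A_{n+1}}. Setting t_j = ‖P − A_j‖ for 1 ≤ j ≤ n+1, we have (n+1) · ( t_0⁴ + Σ_{j=1}^{n+1} t_j⁴ ) = ( t_0² + Σ_{j=1}^{n+1} t_j² )². -/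
open Finset

/-- The relation among the distances from a point `P` in the affine hull of a
regular `n`-simplex of edge length `t₀` to its `n+1` vertices. -/
theorem stmt_5 {E : Type*} [NormedAddCommGroup E] [InnerProductSpace ℝ E]
    (n : ℕ) (hn : 2 ≤ n) (A : Fin (n + 1) → E) (t₀ : ℝ)
    (hA : AffineIndependent ℝ A)
    (hreg : ∀ i j : Fin (n + 1), i ≠ j → dist (A i) (A j) = t₀)
    (P : E) (hP : P ∈ affineSpan ℝ (Set.range A)) :
    ((n : ℝ) + 1) * (t₀ ^ 4 + ∑ j, dist P (A j) ^ 4) =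
      (t₀ ^ 2 + ∑ j, dist P (A j) ^ 2) ^ 2 := by
  classical
  obtain ⟨w, hw, hPw⟩ := eq_affineCombination_of_mem_affineSpan_of_fintype hP
  set S : ℝ := ∑ k, w k ^ 2 with hS
  have key : ∀ j, dist P (A j) ^ 2 = t₀ ^ 2 / 2 * (1 + S - 2 * w j) := by
    intro j
    set δ : Fin (n + 1) → ℝ := Finset.affineCombinationSingleWeights ℝ j with hδdef
    have hδ : ∑ k, δ k = 1 := Finset.univ.sum_affineCombinationSingleWeights ℝ (mem_univ j)
    have hAj : Finset.univ.affineCombination ℝ A δ = A j :=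
      Finset.univ.affineCombination_affineCombinationSingleWeights ℝ A (mem_univ j)
    set v : Fin (n + 1) → ℝ := w - δ with hvdef
    have hv0 : ∑ k, v k = 0 := by
      simp only [hvdef, Pi.sub_apply, Finset.sum_sub_distrib, hw, hδ, sub_self]
    have hvsq : ∑ k, v k * v k = 1 + S - 2 * w j := by
      have : ∀ k, v k * v k = w k ^ 2 - 2 * (if k = j then w k else 0)
          + (if k = j then (1:ℝ) else 0) := by
        intro k
        simp only [hvdef, Pi.sub_apply, hδdef]
        by_cases h : k = j
        · subst h
          rw [Finset.affineCombinationSingleWeights_apply_self]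
          simp; ring
        · rw [Finset.affineCombinationSingleWeights_apply_of_ne ℝ h]
          simp [h]; ring
      simp only [this, Finset.sum_add_distrib, Finset.sum_sub_distrib, ← Finset.mul_sum,
        Finset.sum_ite_eq' Finset.univ j, mem_univ, if_true, ← hS]
      ring
    have hdsum : ∑ k, ∑ l, v k * v l * (dist (A k) (A l) * dist (A k) (A l))
        = -(t₀ ^ 2 * ∑ k, v k * v k) := by
      have hterm : ∀ k l : Fin (n + 1), v k * v l * (dist (A k) (A l) * dist (A k) (A l))
          = v k * (v l * t₀ ^ 2) - (if l = k then v k * v l * t₀ ^ 2 else 0) := by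
        intro k l
        by_cases h : l = k
        · subst h; rw [dist_self, if_pos rfl]; ring
        · rw [hreg k l (fun hh => h hh.symm), if_neg h]; ring
      calc ∑ k, ∑ l, v k * v l * (dist (A k) (A l) * dist (A k) (A l))
          = ∑ k, ((∑ l, v k * (v l * t₀ ^ 2)) - ∑ l, if l = k then v k * v l * t₀ ^ 2 else 0) := by
            refine Finset.sum_congr rfl fun k _ => ?_
            rw [← Finset.sum_sub_distrib]
            exact Finset.sum_congr rfl fun l _ => hterm k l
        _ = ∑ k, (v k * ((∑ l, v l) * t₀ ^ 2) - v k * v k * t₀ ^ 2) := by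
            refine Finset.sum_congr rfl fun k _ => ?_
            rw [Finset.sum_ite_eq' Finset.univ k (fun l => v k * v l * t₀ ^ 2)]
            simp [← Finset.mul_sum, Finset.sum_mul]
        _ = -(t₀ ^ 2 * ∑ k, v k * v k) := by
            rw [hv0, Finset.mul_sum, ← Finset.sum_neg_distrib]
            exact Finset.sum_congr rfl fun k _ => by ring
    have hd := EuclideanGeometry.dist_affineCombination (s := (Finset.univ : Finset (Fin (n+1)))) A hw hδ
    rw [hAj, ← hPw] at hd
    have : dist P (A j) * dist P (A j) = t₀ ^ 2 / 2 * (1 + S - 2 * w j) := by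
      rw [hd]
      have : ∀ k l : Fin (n+1), (w - δ) k * (w - δ) l = v k * v l := fun k l => rfl
      simp only [this, hdsum, hvsq]
      ring
    rw [pow_two, this]
  have hcard : ∑ _j : Fin (n + 1), (1 : ℝ) = (n : ℝ) + 1 := by
    simp [Finset.card_univ]
  have hlin : ∑ j : Fin (n + 1), (1 + S - 2 * w j) = ((n : ℝ) + 1) * (1 + S) - 2 := by
    rw [Finset.sum_sub_distrib, ← Finset.mul_sum, hw]
    have : ∑ _j : Fin (n + 1), (1 + S) = (∑ _j : Fin (n + 1), (1:ℝ)) * (1 + S) := by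
      rw [Finset.sum_mul]; simp
    rw [this, hcard]; ring
  have hsum2 : ∑ j, dist P (A j) ^ 2 = t₀ ^ 2 / 2 * (((n : ℝ) + 1) * (1 + S) - 2) := by
    simp only [key, ← Finset.mul_sum, hlin]
  have hsum4 : ∑ j, dist P (A j) ^ 4 =
      (t₀ ^ 2 / 2) ^ 2 * (((n : ℝ) + 1) * (1 + S) ^ 2 - 4 * (1 + S) + 4 * S) := by
    have : ∀ j, dist P (A j) ^ 4 = (t₀ ^ 2 / 2) ^ 2 *
        ((1 + S) ^ 2 - 2 * (1 + S) * (2 * w j) + 4 * w j ^ 2) := by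
      intro j
      have h2 : dist P (A j) ^ 4 = (dist P (A j) ^ 2) ^ 2 := by ring
      rw [h2, key j]; ring
    have hquad : ∑ j : Fin (n + 1), ((1 + S) ^ 2 - 2 * (1 + S) * (2 * w j) + 4 * w j ^ 2)
        = ((n : ℝ) + 1) * (1 + S) ^ 2 - 4 * (1 + S) + 4 * S := by
      rw [Finset.sum_add_distrib, Finset.sum_sub_distrib]
      have h1 : ∑ _j : Fin (n + 1), (1 + S) ^ 2 = (∑ _j : Fin (n + 1), (1:ℝ)) * (1 + S) ^ 2 := by
        rw [Finset.sum_mul]; simp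
      have h2 : ∑ j : Fin (n + 1), 2 * (1 + S) * (2 * w j) = 4 * (1 + S) := by
        calc ∑ j : Fin (n + 1), 2 * (1 + S) * (2 * w j)
            = ∑ j : Fin (n + 1), (4 * (1 + S)) * w j :=
              Finset.sum_congr rfl fun j _ => by ring
          _ = (4 * (1 + S)) * ∑ j, w j := by rw [Finset.mul_sum]
          _ = 4 * (1 + S) := by rw [hw]; ring
      have h3 : ∑ j : Fin (n + 1), 4 * w j ^ 2 = 4 * S := by
        simp [hS, Finset.mul_sum]
      rw [h1, hcard, h2, h3]
    simp only [this, ← Finset.mul_sum, hquad]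
  rw [hsum2, hsum4]
  ring
end

section
/- Let n ≥ 2, let A_0,…,A_n be the vertices of a regular n-simplex in a Euclidean space with edge length u, circumcenter I and circumradius R, and let P be a point of the affine span of {A_0,…,A_n}. Then ‖P − I‖ = R (i.e., P lies on the circumsphere) if and only if Σ_{j=0}^{n} ‖P − A_j‖² = n u² (equivalently, 2(n+1)R²). -/
open Finset
open RealInnerProductSpace

/-- A point `P` of the affine hull of a regular `n`-simplex with edge length
`u`, circumcenter `I` and circumradius `R` lies on the circumsphere if and only
if the sum of the squared distances from `P` to the vertices equals
`n·u² = 2(n+1)·R²`. -/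
theorem stmt_8 {E : Type*} [NormedAddCommGroup E] [InnerProductSpace ℝ E]
    (n : ℕ) (hn : 2 ≤ n) (A : Fin (n + 1) → E) (u R : ℝ)
    (hA : AffineIndependent ℝ A)
    (hreg : ∀ i j : Fin (n + 1), i ≠ j → dist (A i) (A j) = u)
    (I : E) (hI : I ∈ affineSpan ℝ (Set.range A))
    (hR : ∀ i, dist I (A i) = R)
    (P : E) (hP : P ∈ affineSpan ℝ (Set.range A)) :
    (dist P I = R ↔ ∑ j, dist P (A j) ^ 2 = (n : ℝ) * u ^ 2) ∧
    (n : ℝ) * u ^ 2 = 2 * ((n : ℝ) + 1) * R ^ 2 := by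
  have hR0 : 0 ≤ R := hR 0 ▸ dist_nonneg
  have hAIn : ∀ i, ‖A i - I‖ = R := fun i => by
    rw [← dist_eq_norm, dist_comm]; exact hR i
  set v : E := ∑ j, (A j - I) with hv
  set c : ℝ := R ^ 2 + n * (R ^ 2 - u ^ 2 / 2) with hcdef
  have hinner : ∀ i j : Fin (n + 1),
      ⟪A i - I, A j - I⟫ = if i = j then R ^ 2 else R ^ 2 - u ^ 2 / 2 := by
    intro i j
    have h1 := norm_sub_sq_real (A i - I) (A j - I)
    have h2 : A i - I - (A j - I) = A i - A j := by abel
    rw [h2, hAIn i, hAIn j] at h1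
    by_cases h : i = j
    · subst h
      rw [if_pos rfl]
      simp only [sub_self, norm_zero] at h1
      nlinarith
    · have hu : ‖A i - A j‖ = u := by rw [← dist_eq_norm]; exact hreg i j h
      rw [if_neg h]
      rw [hu] at h1
      nlinarith
  have hcv : ∀ i, ⟪A i - I, v⟫ = c := by
    intro i
    rw [hv, inner_sum]
    calc ∑ j, ⟪A i - I, A j - I⟫
        = ∑ j : Fin (n + 1), ((R ^ 2 - u ^ 2 / 2) +
            if i = j then R ^ 2 - (R ^ 2 - u ^ 2 / 2) else 0) := by
          refine Finset.sum_congr rfl fun j _ => ?_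
          rw [hinner i j]; split <;> ring
      _ = c := by
          rw [Finset.sum_add_distrib, Finset.sum_const, Finset.sum_ite_eq]
          simp [hcdef]
          push_cast
          ring
  have hspan : ∀ Q : E, Q ∈ affineSpan ℝ (Set.range A) → ⟪Q - I, v⟫ = c := by
    intro Q hQ
    obtain ⟨w, hw1, hQw⟩ := eq_affineCombination_of_mem_affineSpan_of_fintype hQ
    rw [Finset.affineCombination_eq_linear_combination _ _ _ hw1] at hQw
    have hQI : Q - I = ∑ j, w j • (A j - I) := by
      rw [hQw]
      simp only [smul_sub, Finset.sum_sub_distrib, ← Finset.sum_smul, hw1, one_smul]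
    rw [hQI, sum_inner]
    calc ∑ j, ⟪w j • (A j - I), v⟫ = ∑ j, w j * c := by
          refine Finset.sum_congr rfl fun j _ => ?_
          rw [real_inner_smul_left, hcv j]
      _ = c := by rw [← Finset.sum_mul, hw1, one_mul]
  have hc0 : c = 0 := by
    have := hspan I hI
    simpa using this.symm
  have key : (n : ℝ) * u ^ 2 = 2 * ((n : ℝ) + 1) * R ^ 2 := by
    rw [hcdef] at hc0
    linear_combination (-2 : ℝ) * hc0
  have hPI : ⟪P - I, v⟫ = 0 := by rw [hspan P hP, hc0]
  have hsum : ∑ j, dist P (A j) ^ 2 = ((n : ℝ) + 1) * (dist P I ^ 2 + R ^ 2) := by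
    have hterm : ∀ j, dist P (A j) ^ 2
        = dist P I ^ 2 - 2 * ⟪P - I, A j - I⟫ + R ^ 2 := by
      intro j
      have h1 := norm_sub_sq_real (P - I) (A j - I)
      have h2 : P - I - (A j - I) = P - A j := by abel
      rw [h2, hAIn j] at h1
      rw [dist_eq_norm, dist_eq_norm, h1]
    rw [Finset.sum_congr rfl fun j _ => hterm j]
    have hPIv : ∑ j, ⟪P - I, A j - I⟫ = 0 := by
      rw [← inner_sum, ← hv, hPI]
    rw [Finset.sum_add_distrib, Finset.sum_sub_distrib, Finset.sum_const, Finset.sum_const,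
      ← Finset.mul_sum, hPIv]
    simp [Finset.card_univ]
    push_cast
    ring
  refine ⟨⟨fun h => ?_, fun h => ?_⟩, key⟩
  · rw [hsum, h]
    linear_combination -key
  · rw [hsum] at h
    rw [key] at h
    have hn1 : (0 : ℝ) < (n : ℝ) + 1 := by positivity
    have hd2 : dist P I ^ 2 = R ^ 2 := by
      have h' : ((n : ℝ) + 1) * (dist P I ^ 2 + R ^ 2) = ((n : ℝ) + 1) * (2 * R ^ 2) := by
        linarith
      have := mul_left_cancel₀ (ne_of_gt hn1) h'
      linarith
    nlinarith [dist_nonneg (x := P) (y := I), hR0]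
end

section
/- (Pompeiu's theorem.) Let A, B, C be the vertices of an equilateral triangle in a Euclidean space and let P be a point of the affine span of {A, B, C}. Setting x = ‖P − A‖, y = ‖P − B‖, z = ‖P − C‖, the three triangle inequalities hold: x ≤ y + z, y ≤ z + x, and z ≤ x + y. -/
/-- Pompeiu's theorem: the distances from a point `P` in the plane of an
equilateral triangle `ABC` to its vertices satisfy the triangle inequalities. -/
theorem stmt_9 {E : Type*} [NormedAddCommGroup E] [InnerProductSpace ℝ E]
    (A B C : E) (hABC : AffineIndependent ℝ ![A, B, C])
    (hAB : dist A B = dist B C) (hBC : dist B C = dist C A)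
    (P : E) (hP : P ∈ affineSpan ℝ ({A, B, C} : Set E)) :
    dist P A ≤ dist P B + dist P C ∧
    dist P B ≤ dist P C + dist P A ∧
    dist P C ≤ dist P A + dist P B := by
  have hABne : A ≠ B := by
    intro h
    have : (0 : Fin 3) = 1 := hABC.injective (by simp [h])
    simp at this
  have hd : (0 : ℝ) < dist A B := dist_pos.2 hABne
  have key : ∀ P₁ P₂ P₃ Q : E, dist P₁ P₂ = dist A B → dist P₂ P₃ = dist A B →
      dist P₁ P₃ = dist A B → dist Q P₂ ≤ dist Q P₁ + dist Q P₃ := by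
    intro P₁ P₂ P₃ Q h12 h23 h13
    have := EuclideanGeometry.mul_dist_le_mul_dist_add_mul_dist Q P₁ P₂ P₃
    rw [h12, h23, h13] at this
    have h2 : dist Q P₂ * dist A B ≤ (dist Q P₁ + dist Q P₃) * dist A B := by
      rw [add_mul]; linarith [this]
    exact le_of_mul_le_mul_right h2 hd
  have e1 : dist B C = dist A B := hAB.symm
  have e2 : dist C A = dist A B := by rw [← hBC, ← hAB]
  have e3 : dist A C = dist A B := by rw [dist_comm]; exact e2
  have e4 : dist C B = dist A B := by rw [dist_comm]; exact e1
  have e5 : dist B A = dist A B := dist_comm B A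
  refine ⟨key B A C P e5 e3 e1, (add_comm (dist P C) (dist P A) ▸ key A B C P rfl e1 e3), key A C B P e3 e4 rfl⟩
end

section
/- Let A, B, C be the vertices of an equilateral triangle in a Euclidean space, with circumcenter I and circumradius R, and let P be a point of the affine span of {A, B, C}. Setting x = ‖P − A‖, y = ‖P − B‖, z = ‖P − C‖, the triangle with side lengths x, y, z is degenerate if and only if P lies on the circumcircle; that is, at least one of the equalities x = y + z, y = z + x, z = x + y holds if and only if ‖P − I‖ = R. -/
open scoped RealInnerProductSpace

/-- The Pompeiu triangle of a point `P` in the plane of an equilateral triangle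
`ABC` is degenerate if and only if `P` lies on the circumcircle. -/
theorem stmt_10 {E : Type*} [NormedAddCommGroup E] [InnerProductSpace ℝ E]
    (A B C : E) (hABC : AffineIndependent ℝ ![A, B, C])
    (hAB : dist A B = dist B C) (hBC : dist B C = dist C A)
    (I : E) (R : ℝ) (hI : I ∈ affineSpan ℝ ({A, B, C} : Set E))
    (hRA : dist I A = R) (hRB : dist I B = R) (hRC : dist I C = R)
    (P : E) (hP : P ∈ affineSpan ℝ ({A, B, C} : Set E)) :
    (dist P A = dist P B + dist P C ∨
     dist P B = dist P C + dist P A ∨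
     dist P C = dist P A + dist P B) ↔ dist P I = R := by
  -- notation
  set e1 : E := B - A with he1
  set e2 : E := C - A with he2
  set s : ℝ := dist A B with hsdef
  -- A ≠ B
  have hANB : A ≠ B := by
    have := hABC.injective.ne (show (0 : Fin 3) ≠ 1 by decide)
    simpa using this
  have hs0 : s ≠ 0 := dist_ne_zero.2 hANB
  -- coefficients for points of the affine span
  have hmem : ∀ Q : E, Q ∈ affineSpan ℝ ({A, B, C} : Set E) →
      ∃ m n : ℝ, Q - A = m • e1 + n • e2 := by
    intro Q hQ
    have hA : A ∈ affineSpan ℝ ({A, B, C} : Set E) := mem_affineSpan ℝ (by simp)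
    have h1 : Q -ᵥ A ∈ (affineSpan ℝ ({A, B, C} : Set E)).direction :=
      AffineSubspace.vsub_mem_direction hQ hA
    rw [direction_affineSpan] at h1
    have hBA : e1 ∈ Submodule.span ℝ ({e1, e2} : Set E) :=
      Submodule.subset_span (by simp)
    have hCA : e2 ∈ Submodule.span ℝ ({e1, e2} : Set E) :=
      Submodule.subset_span (by simp)
    have h2 : vectorSpan ℝ ({A, B, C} : Set E) ≤ Submodule.span ℝ ({e1, e2} : Set E) := by
      rw [vectorSpan_def]
      apply Submodule.span_le.2
      rintro v ⟨p, hp, q, hq, rfl⟩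
      simp only [Set.mem_insert_iff, Set.mem_singleton_iff] at hp hq
      have key : ∀ r : E, r ∈ ({A, B, C} : Set E) →
          r - A ∈ Submodule.span ℝ ({e1, e2} : Set E) := by
        rintro r (rfl | rfl | rfl)
        · simp only [sub_self]; exact Submodule.zero_mem _
        · exact hBA
        · exact hCA
      have hp' := key p (by simp [hp])
      have hq' := key q (by simp [hq])
      have heq : p - q = (p - A) - (q - A) := by abel
      have : p -ᵥ q ∈ Submodule.span ℝ ({e1, e2} : Set E) := by
        rw [vsub_eq_sub, heq]; exact Submodule.sub_mem _ hp' hq'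
      exact this
    obtain ⟨m, n, hmn⟩ := Submodule.mem_span_pair.mp (h2 h1)
    exact ⟨m, n, by simpa [vsub_eq_sub] using hmn.symm⟩
  obtain ⟨m1, n1, hI1⟩ := hmem I hI
  obtain ⟨m2, n2, hP1⟩ := hmem P hP
  -- inner products
  have h11 : ⟪e1, e1⟫ = s ^ 2 := by
    rw [real_inner_self_eq_norm_sq, he1, ← dist_eq_norm, dist_comm]
  have h22 : ⟪e2, e2⟫ = s ^ 2 := by
    rw [real_inner_self_eq_norm_sq, he2, ← dist_eq_norm, ← hBC, ← hAB]
  have h12 : ⟪e1, e2⟫ = s ^ 2 / 2 := by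
    have hd : ‖e1 - e2‖ ^ 2 = s ^ 2 := by
      rw [show e1 - e2 = B - C by rw [he1, he2]; abel, ← dist_eq_norm, ← hAB]
    have hexp : ‖e1 - e2‖ ^ 2 = ⟪e1, e1⟫ - 2 * ⟪e1, e2⟫ + ⟪e2, e2⟫ := by
      rw [← real_inner_self_eq_norm_sq]
      simp only [inner_sub_left, inner_sub_right, real_inner_comm e1 e2]
      ring
    rw [hexp, h11, h22] at hd
    linarith
  -- norm of a combination
  have key : ∀ (m n : ℝ) (v : E), v = m • e1 + n • e2 →
      ‖v‖ ^ 2 = (m ^ 2 + m * n + n ^ 2) * s ^ 2 := by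
    intro m n v hv
    rw [hv, ← real_inner_self_eq_norm_sq]
    simp only [inner_add_left, inner_add_right, real_inner_smul_left, real_inner_smul_right,
      real_inner_comm e1 e2, h11, h22, h12]
    ring
  -- squared distances
  have hx2 : dist P A ^ 2 = (m2 ^ 2 + m2 * n2 + n2 ^ 2) * s ^ 2 := by
    rw [dist_eq_norm]; exact key _ _ _ hP1
  have hy2 : dist P B ^ 2 = ((m2 - 1) ^ 2 + (m2 - 1) * n2 + n2 ^ 2) * s ^ 2 := by
    rw [dist_eq_norm]
    refine key _ _ _ ?_
    have : P - B = (P - A) - e1 := by rw [he1]; abel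
    rw [this, hP1]; module
  have hz2 : dist P C ^ 2 = (m2 ^ 2 + m2 * (n2 - 1) + (n2 - 1) ^ 2) * s ^ 2 := by
    rw [dist_eq_norm]
    refine key _ _ _ ?_
    have : P - C = (P - A) - e2 := by rw [he2]; abel
    rw [this, hP1]; module
  -- circumcenter equations
  have hIA : R ^ 2 = (m1 ^ 2 + m1 * n1 + n1 ^ 2) * s ^ 2 := by
    rw [← hRA, dist_eq_norm]; exact key _ _ _ hI1
  have hIB : R ^ 2 = ((m1 - 1) ^ 2 + (m1 - 1) * n1 + n1 ^ 2) * s ^ 2 := by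
    rw [← hRB, dist_eq_norm]
    refine key _ _ _ ?_
    have : I - B = (I - A) - e1 := by rw [he1]; abel
    rw [this, hI1]; module
  have hIC : R ^ 2 = (m1 ^ 2 + m1 * (n1 - 1) + (n1 - 1) ^ 2) * s ^ 2 := by
    rw [← hRC, dist_eq_norm]
    refine key _ _ _ ?_
    have : I - C = (I - A) - e2 := by rw [he2]; abel
    rw [this, hI1]; module
  have hs2 : s ^ 2 ≠ 0 := pow_ne_zero _ hs0
  have hm1 : 2 * m1 + n1 = 1 := by
    have h : (2 * m1 + n1 - 1) * s ^ 2 = 0 := by linear_combination hIB - hIA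
    have := mul_eq_zero.mp h
    rcases this with h' | h'
    · linarith
    · exact absurd h' hs2
  have hn1 : m1 + 2 * n1 = 1 := by
    have h : (m1 + 2 * n1 - 1) * s ^ 2 = 0 := by linear_combination hIC - hIA
    rcases mul_eq_zero.mp h with h' | h'
    · linarith
    · exact absurd h' hs2
  have hm1' : m1 = 1 / 3 := by linarith
  have hn1' : n1 = 1 / 3 := by linarith
  have hR2 : R ^ 2 = s ^ 2 / 3 := by
    rw [hIA, hm1', hn1']; ring
  have hd2 : dist P I ^ 2 = ((m2 - 1/3) ^ 2 + (m2 - 1/3) * (n2 - 1/3) + (n2 - 1/3) ^ 2) * s ^ 2 := by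
    rw [dist_eq_norm]
    refine key _ _ _ ?_
    have : P - I = (P - A) - (I - A) := by abel
    rw [this, hP1, hI1, hm1', hn1']; module
  set x := dist P A
  set y := dist P B
  set z := dist P C
  set d := dist P I
  have hxnn : 0 ≤ x := dist_nonneg
  have hynn : 0 ≤ y := dist_nonneg
  have hznn : 0 ≤ z := dist_nonneg
  have hdnn : 0 ≤ d := dist_nonneg
  have hRnn : 0 ≤ R := hRA ▸ dist_nonneg
  -- the key identity
  have hQ : (x + y + z) * (-x + y + z) * (x - y + z) * (x + y - z)
      = 3 * (d ^ 2 - R ^ 2) ^ 2 := by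
    have e : (x + y + z) * (-x + y + z) * (x - y + z) * (x + y - z)
        = 2 * (x ^ 2 * y ^ 2 + y ^ 2 * z ^ 2 + z ^ 2 * x ^ 2)
          - ((x ^ 2) ^ 2 + (y ^ 2) ^ 2 + (z ^ 2) ^ 2) := by ring
    rw [e, hx2, hy2, hz2, hd2, hR2]; ring
  clear hmem hI1 hP1 h11 h22 h12 key hx2 hy2 hz2 hIA hIB hIC hd2 hR2 hm1 hn1
    hm1' hn1' hI hP hABC hAB hBC hRA hRB hRC hANB hs0 hs2
  constructor
  · rintro (h | h | h)
    · have hz0 : (-x + y + z) = 0 := by linarith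
      have : 3 * (d ^ 2 - R ^ 2) ^ 2 = 0 := by rw [← hQ, hz0]; ring
      have hsq : d ^ 2 = R ^ 2 := by
        have h3 : (d ^ 2 - R ^ 2) ^ 2 = 0 := by linarith
        have h4 : d ^ 2 - R ^ 2 = 0 := by
          exact pow_eq_zero_iff (two_ne_zero) |>.mp h3
        linarith
      have : (d - R) * (d + R) = 0 := by linear_combination hsq
      rcases mul_eq_zero.mp this with h' | h'
      · linarith
      · linarith
    · have hz0 : (x - y + z) = 0 := by linarith
      have : 3 * (d ^ 2 - R ^ 2) ^ 2 = 0 := by rw [← hQ, hz0]; ring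
      have hsq : d ^ 2 = R ^ 2 := by
        have h3 : (d ^ 2 - R ^ 2) ^ 2 = 0 := by linarith
        have h4 : d ^ 2 - R ^ 2 = 0 := by
          exact pow_eq_zero_iff (two_ne_zero) |>.mp h3
        linarith
      have : (d - R) * (d + R) = 0 := by linear_combination hsq
      rcases mul_eq_zero.mp this with h' | h'
      · linarith
      · linarith
    · have hz0 : (x + y - z) = 0 := by linarith
      have : 3 * (d ^ 2 - R ^ 2) ^ 2 = 0 := by rw [← hQ, hz0]; ring
      have hsq : d ^ 2 = R ^ 2 := by
        have h3 : (d ^ 2 - R ^ 2) ^ 2 = 0 := by linarith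
        have h4 : d ^ 2 - R ^ 2 = 0 := by
          exact pow_eq_zero_iff (two_ne_zero) |>.mp h3
        linarith
      have : (d - R) * (d + R) = 0 := by linear_combination hsq
      rcases mul_eq_zero.mp this with h' | h'
      · linarith
      · linarith
  · intro hdR
    have h0 : (x + y + z) * (-x + y + z) * (x - y + z) * (x + y - z) = 0 := by
      rw [hQ, hdR]; ring
    rcases mul_eq_zero.mp h0 with h' | h'
    · rcases mul_eq_zero.mp h' with h'' | h''
      · rcases mul_eq_zero.mp h'' with h3 | h3
        · -- x + y + z = 0 with all nonneg: x = y = z = 0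
          left; linarith
        · left; linarith
      · right; left; linarith
    · right; right; linarith
end

section
/- Let n ≥ 2 and m ≥ n+1 be integers, and let A_0,…,A_n be the vertices of a regular n-simplex of edge length u > 0 in ℝ^m (Euclidean space). Let Ω = { Q ∈ ℝ^m : ‖Q − A_i‖ = u for all i = 1,…,n }, i.e., the set of points Q for which Q, A_1,…,A_n are the vertices of a regular n-simplex of edge length u. Then { ‖Q − A_0‖ : Q ∈ Ω } = [0, √(2(n+1)/n) · u], the closed interval from 0 to √(2(n+1)/n)·u. -/
open Finset

local notation "⟪" x ", " y "⟫" => @inner ℝ _ _ x y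

/-- For a regular `n`-simplex `A₀,…,Aₙ` of edge length `u` in `ℝᵐ` with
`m ≥ n + 1`, the set of distances `‖Q − A₀‖` over all points `Q` such that
`Q, A₁, …, Aₙ` is a regular `n`-simplex of edge length `u` is exactly the
closed interval `[0, √(2(n+1)/n)·u]`. -/
theorem stmt_12 (n m : ℕ) (hn : 2 ≤ n) (hm : n + 1 ≤ m)
    (A : Fin (n + 1) → EuclideanSpace ℝ (Fin m)) (u : ℝ) (hu : 0 < u)
    (hA : AffineIndependent ℝ A)
    (hreg : ∀ i j : Fin (n + 1), i ≠ j → dist (A i) (A j) = u) :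
    (fun Q => dist Q (A 0)) ''
        {Q : EuclideanSpace ℝ (Fin m) | ∀ i : Fin (n + 1), i ≠ 0 → dist Q (A i) = u}
      = Set.Icc 0 (Real.sqrt (2 * ((n : ℝ) + 1) / (n : ℝ)) * u) := by
  obtain ⟨k, rfl⟩ : ∃ k, n = k + 2 := ⟨n - 2, by omega⟩
  clear hn hA
  have hc0 : ((k : ℝ) + 2) ≠ 0 := by positivity
  set g : EuclideanSpace ℝ (Fin m) := ((k : ℝ) + 2)⁻¹ • ∑ i : Fin (k + 2), A i.succ
    with hgdef
  have hdist : ∀ i j : Fin (k + 2 + 1), i ≠ j → ‖A i - A j‖ = u := fun i j h => by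
    rw [← dist_eq_norm]; exact hreg i j h
  have hinner : ∀ r p q : Fin (k + 2 + 1), r ≠ p → r ≠ q → p ≠ q →
      ⟪A r - A p, A r - A q⟫ = u ^ 2 / 2 := by
    intro r p q hrp hrq hpq
    have e := norm_sub_sq_real (A r - A p) (A r - A q)
    rw [show A r - A p - (A r - A q) = A q - A p by abel] at e
    rw [hdist _ _ hrp, hdist _ _ hrq, hdist _ _ hpq.symm] at e
    linarith
  have hgsmul : ((k : ℝ) + 2) • g = ∑ i : Fin (k + 2), A i.succ := by
    rw [hgdef, smul_smul, mul_inv_cancel₀ hc0, one_smul]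
  have hcastsmul : ∀ x : EuclideanSpace ℝ (Fin m), (k + 2) • x = ((k : ℝ) + 2) • x := by
    intro x
    rw [show ((k : ℝ) + 2) = ((k + 2 : ℕ) : ℝ) by push_cast; ring, Nat.cast_smul_eq_nsmul]
  have hsumsub : ∀ kk : Fin (k + 2 + 1),
      ∑ i : Fin (k + 2), (A kk - A i.succ) = ((k : ℝ) + 2) • (A kk - g) := by
    intro kk
    rw [Finset.sum_sub_distrib, smul_sub, hgsmul, Finset.sum_const, Finset.card_univ,
      Fintype.card_fin, hcastsmul]
  have hsum0 : ∑ i : Fin (k + 2), (A i.succ - g) = 0 := by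
    rw [Finset.sum_sub_distrib, Finset.sum_const, Finset.card_univ, Fintype.card_fin,
      hcastsmul, hgsmul, sub_self]
  have key : ∀ (kk : Fin (k + 2 + 1)) (S : Finset (Fin (k + 2))),
      (∀ i ∈ S, i.succ ≠ kk) → (∀ i ∉ S, i.succ = kk) →
      ∑ i : Fin (k + 2), ∑ j : Fin (k + 2), ⟪A kk - A i.succ, A kk - A j.succ⟫
        = (S.card : ℝ) * u ^ 2 + (S.card : ℝ) * ((S.card : ℝ) - 1) * (u ^ 2 / 2) := by
    intro kk S hS hS'
    rcases S.eq_empty_or_nonempty with rfl | hne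
    · have hz : ∀ i : Fin (k + 2), A kk - A i.succ = 0 := fun i => by
        rw [hS' i (Finset.notMem_empty i), sub_self]
      simp [hz]
    have h1 : 1 ≤ S.card := Finset.card_pos.mpr hne
    have hrow0 : ∀ i : Fin (k + 2),
        ∑ j : Fin (k + 2), ⟪A kk - A i.succ, A kk - A j.succ⟫
          = ∑ j ∈ S, ⟪A kk - A i.succ, A kk - A j.succ⟫ :=
      fun i => (Finset.sum_subset S.subset_univ
        (fun j _ hj => by rw [hS' j hj, sub_self, inner_zero_right])).symm
    have hrestrict : ∑ i : Fin (k + 2), ∑ j : Fin (k + 2),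
        ⟪A kk - A i.succ, A kk - A j.succ⟫
        = ∑ i ∈ S, ∑ j ∈ S, ⟪A kk - A i.succ, A kk - A j.succ⟫ := by
      rw [Finset.sum_congr rfl fun i _ => hrow0 i]
      exact (Finset.sum_subset S.subset_univ (fun i _ hi => by
        refine Finset.sum_eq_zero fun j _ => ?_
        rw [hS' i hi, sub_self, inner_zero_left])).symm
    have hrow : ∀ i ∈ S, ∑ j ∈ S, ⟪A kk - A i.succ, A kk - A j.succ⟫
        = u ^ 2 + ((S.card : ℝ) - 1) * (u ^ 2 / 2) := by
      intro i hi
      rw [← Finset.add_sum_erase _ _ hi]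
      congr 1
      · rw [real_inner_self_eq_norm_sq, hdist _ _ (hS i hi).symm]
      · rw [Finset.sum_congr rfl fun j hj =>
            hinner kk i.succ j.succ (hS i hi).symm (hS j (Finset.mem_of_mem_erase hj)).symm
              ((Fin.succ_injective _).ne (Finset.ne_of_mem_erase hj).symm),
          Finset.sum_const, Finset.card_erase_of_mem hi, nsmul_eq_mul,
          Nat.cast_sub h1, Nat.cast_one]
    rw [hrestrict, Finset.sum_congr rfl hrow, Finset.sum_const, nsmul_eq_mul]
    ring
  have hnormsq : ∀ kk : Fin (k + 2 + 1),
      ((k : ℝ) + 2) ^ 2 * ‖A kk - g‖ ^ 2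
        = ∑ i : Fin (k + 2), ∑ j : Fin (k + 2), ⟪A kk - A i.succ, A kk - A j.succ⟫ := by
    intro kk
    have e1 : ‖∑ i : Fin (k + 2), (A kk - A i.succ)‖ ^ 2
        = ∑ i : Fin (k + 2), ∑ j : Fin (k + 2), ⟪A kk - A i.succ, A kk - A j.succ⟫ := by
      rw [← real_inner_self_eq_norm_sq, sum_inner]
      exact Finset.sum_congr rfl fun i _ => inner_sum _ _ _
    rw [← e1, hsumsub, norm_smul, Real.norm_eq_abs, mul_pow, sq_abs]
  -- value of ρ²
  have key0 := key 0 univ (fun i _ => Fin.succ_ne_zero i)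
    (fun i hi => absurd (Finset.mem_univ i) hi)
  rw [Finset.card_univ, Fintype.card_fin] at key0
  have hrho2 : ‖A 0 - g‖ ^ 2 = ((k : ℝ) + 3) * u ^ 2 / (2 * ((k : ℝ) + 2)) := by
    have h := hnormsq 0
    rw [key0] at h
    have h2 : ((k : ℝ) + 2) ^ 2 * ‖A 0 - g‖ ^ 2
        = ((k : ℝ) + 2) ^ 2 * (((k : ℝ) + 3) * u ^ 2 / (2 * ((k : ℝ) + 2))) := by
      rw [h]; push_cast; field_simp; ring
    exact mul_left_cancel₀ (pow_ne_zero 2 hc0) h2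
  have hasq : ∀ i₀ : Fin (k + 2),
      ‖A i₀.succ - g‖ ^ 2 = ((k : ℝ) + 1) * u ^ 2 / (2 * ((k : ℝ) + 2)) := by
    intro i₀
    have hS : ∀ i ∈ univ.erase i₀, i.succ ≠ i₀.succ := fun i hi =>
      (Fin.succ_injective _).ne (Finset.ne_of_mem_erase hi)
    have hS' : ∀ i ∉ univ.erase i₀, i.succ = i₀.succ := by
      intro i hi
      have : i = i₀ := by
        by_contra hne
        exact hi (Finset.mem_erase.mpr ⟨hne, Finset.mem_univ i⟩)
      rw [this]
    have h := hnormsq i₀.succ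
    rw [key _ _ hS hS', Finset.card_erase_of_mem (Finset.mem_univ i₀),
      Finset.card_univ, Fintype.card_fin] at h
    have hcard : ((k + 2 - 1 : ℕ) : ℝ) = (k : ℝ) + 1 := by
      rw [show k + 2 - 1 = k + 1 from rfl]; push_cast; ring
    rw [hcard] at h
    have h2 : ((k : ℝ) + 2) ^ 2 * ‖A i₀.succ - g‖ ^ 2
        = ((k : ℝ) + 2) ^ 2 * (((k : ℝ) + 1) * u ^ 2 / (2 * ((k : ℝ) + 2))) := by
      rw [h]; field_simp; ring
    exact mul_left_cancel₀ (pow_ne_zero 2 hc0) h2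
  set w0 : EuclideanSpace ℝ (Fin m) := A 0 - g with hw0def
  set ρ : ℝ := ‖w0‖ with hρdef
  have hρ0 : 0 ≤ ρ := by rw [hρdef]; exact norm_nonneg _
  have hρ2 : ρ ^ 2 = ((k : ℝ) + 3) * u ^ 2 / (2 * ((k : ℝ) + 2)) := hrho2
  have hβρ : ((k : ℝ) + 3) * u ^ 2 / (2 * ((k : ℝ) + 2))
      + ((k : ℝ) + 1) * u ^ 2 / (2 * ((k : ℝ) + 2)) = u ^ 2 := by
    field_simp; ring
  have horthw0 : ∀ i : Fin (k + 2), ⟪w0, A i.succ - g⟫ = 0 := by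
    intro i
    have e := norm_sub_sq_real w0 (A i.succ - g)
    rw [show w0 - (A i.succ - g) = A 0 - A i.succ by rw [hw0def]; abel] at e
    rw [hdist _ _ (Fin.succ_ne_zero i).symm, hasq i, ← hρdef] at e
    linarith [hρ2, hβρ]
  -- characterization of Ω
  have hchar : ∀ Q : EuclideanSpace ℝ (Fin m),
      (∀ i : Fin (k + 2 + 1), i ≠ 0 → dist Q (A i) = u) ↔
        ((∀ i : Fin (k + 2), ⟪Q - g, A i.succ - g⟫ = 0) ∧ ‖Q - g‖ = ρ) := by
    intro Q
    constructor
    · intro hQ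
      have hQ' : ∀ i : Fin (k + 2),
          ‖Q - g‖ ^ 2 - 2 * ⟪Q - g, A i.succ - g⟫
            + ((k : ℝ) + 1) * u ^ 2 / (2 * ((k : ℝ) + 2)) = u ^ 2 := by
        intro i
        have e := norm_sub_sq_real (Q - g) (A i.succ - g)
        rw [show Q - g - (A i.succ - g) = Q - A i.succ by abel, ← dist_eq_norm,
          hQ i.succ (Fin.succ_ne_zero i), hasq i] at e
        linarith
      have hsum' : ∑ i : Fin (k + 2), ⟪Q - g, A i.succ - g⟫ = 0 := by
        rw [← inner_sum, hsum0, inner_zero_right]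
      have ht : ∀ i : Fin (k + 2), ⟪Q - g, A i.succ - g⟫
          = (‖Q - g‖ ^ 2 + ((k : ℝ) + 1) * u ^ 2 / (2 * ((k : ℝ) + 2)) - u ^ 2) / 2 :=
        fun i => by linarith [hQ' i]
      have hsum'' : ((k : ℝ) + 2)
          * ((‖Q - g‖ ^ 2 + ((k : ℝ) + 1) * u ^ 2 / (2 * ((k : ℝ) + 2)) - u ^ 2) / 2) = 0 := by
        rw [← hsum', Finset.sum_congr rfl fun i _ => ht i, Finset.sum_const,
          Finset.card_univ, Fintype.card_fin, nsmul_eq_mul]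
        push_cast; ring
      have hval : ‖Q - g‖ ^ 2 = ρ ^ 2 := by
        rcases mul_eq_zero.mp hsum'' with h | h
        · exact absurd h hc0
        · rw [hρ2]; linarith
      have hnorm : ‖Q - g‖ = ρ := by
        have h := congrArg Real.sqrt hval
        rwa [Real.sqrt_sq (norm_nonneg _), Real.sqrt_sq hρ0] at h
      refine ⟨fun i => ?_, hnorm⟩
      rw [ht i, hval, hρ2]
      linarith
    · rintro ⟨horth, hnorm⟩ i hi
      obtain ⟨j, rfl⟩ : ∃ j : Fin (k + 2), i = j.succ :=
        ⟨i.pred hi, (Fin.succ_pred i hi).symm⟩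
      have e := norm_sub_sq_real (Q - g) (A j.succ - g)
      rw [show Q - g - (A j.succ - g) = Q - A j.succ by abel, horth j, hasq j, hnorm] at e
      have h2 : ‖Q - A j.succ‖ ^ 2 = u ^ 2 := by rw [e, hρ2]; linarith
      have h3 := congrArg Real.sqrt h2
      rw [Real.sqrt_sq (norm_nonneg _), Real.sqrt_sq hu.le] at h3
      rw [dist_eq_norm]; exact h3
  -- the orthogonal complement
  set D : Submodule ℝ (EuclideanSpace ℝ (Fin m)) :=
    Submodule.span ℝ (Set.range fun i : Fin (k + 2) => A i.succ - g) with hDdef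
  have hmemD : ∀ q : EuclideanSpace ℝ (Fin m),
      q ∈ Dᗮ ↔ ∀ i : Fin (k + 2), ⟪q, A i.succ - g⟫ = 0 := by
    intro q
    rw [Submodule.mem_orthogonal']
    constructor
    · exact fun h i => h _ (Submodule.subset_span ⟨i, rfl⟩)
    · intro h x hx
      induction hx using Submodule.span_induction with
      | mem x hx => obtain ⟨i, rfl⟩ := hx; exact h i
      | zero => exact inner_zero_right q
      | add x y _ _ hx hy => rw [inner_add_right, hx, hy, add_zero]
      | smul c x _ hx => rw [real_inner_smul_right, hx, mul_zero]
  have hw0mem : w0 ∈ Dᗮ := (hmemD w0).mpr horthw0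
  -- dimension bound
  have hDle : Module.finrank ℝ D ≤ k + 1 := by
    have hspan : D ≤ Submodule.span ℝ
        (Set.range fun i : Fin (k + 1) => A i.succ.succ - g) := by
      rw [hDdef, Submodule.span_le]
      rintro x ⟨i, rfl⟩
      refine Fin.cases ?_ (fun j => Submodule.subset_span ⟨j, rfl⟩) i
      show A (Fin.succ 0) - g ∈ _
      have h0 : (A (0 : Fin (k + 2)).succ - g)
          = -∑ j : Fin (k + 1), (A j.succ.succ - g) := by
        have hs := hsum0
        rw [Fin.sum_univ_succ] at hs
        exact eq_neg_of_add_eq_zero_left hs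
      rw [h0]
      exact Submodule.neg_mem _ (Submodule.sum_mem _
        fun j _ => Submodule.subset_span ⟨j, rfl⟩)
    have h1 := Submodule.finrank_mono hspan
    have h2 := finrank_range_le_card (R := ℝ)
      (fun i : Fin (k + 1) => A i.succ.succ - g)
    rw [Set.finrank] at h2
    simpa using h1.trans h2
  have hDorth : 2 ≤ Module.finrank ℝ Dᗮ := by
    have h1 := Submodule.finrank_add_finrank_orthogonal D
    have h2 : Module.finrank ℝ (EuclideanSpace ℝ (Fin m)) = m := finrank_euclideanSpace_fin
    omega
  have hrankD : 1 < Module.rank ℝ Dᗮ := by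
    rw [← Module.finrank_eq_rank ℝ]
    exact_mod_cast Nat.lt_of_lt_of_le Nat.one_lt_two hDorth
  -- the sphere picture
  set f : Dᗮ → ℝ := fun w => ‖(w : EuclideanSpace ℝ (Fin m)) - w0‖ with hfdef
  have hconn : IsConnected (Metric.sphere (0 : Dᗮ) ρ) := isConnected_sphere hrankD 0 hρ0
  have hfc : Continuous f := (continuous_subtype_val.sub continuous_const).norm
  have hTconn : IsConnected (f '' Metric.sphere 0 ρ) := hconn.image f hfc.continuousOn
  have hW0mem : (⟨w0, hw0mem⟩ : Dᗮ) ∈ Metric.sphere (0 : Dᗮ) ρ := by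
    rw [mem_sphere_zero_iff_norm]
    exact hρdef.symm
  have h0T : (0 : ℝ) ∈ f '' Metric.sphere 0 ρ := by
    refine ⟨⟨w0, hw0mem⟩, hW0mem, ?_⟩
    simp [hfdef]
  have hW0mem' : -(⟨w0, hw0mem⟩ : Dᗮ) ∈ Metric.sphere (0 : Dᗮ) ρ := by
    rw [mem_sphere_zero_iff_norm, norm_neg]
    exact hρdef.symm
  have h2T : 2 * ρ ∈ f '' Metric.sphere 0 ρ := by
    refine ⟨-(⟨w0, hw0mem⟩ : Dᗮ), hW0mem', ?_⟩
    show ‖-w0 - w0‖ = 2 * ρ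
    rw [show -w0 - w0 = -((2 : ℝ) • w0) by rw [two_smul]; abel, norm_neg, norm_smul,
      Real.norm_ofNat, ← hρdef]
  have hsubT : f '' Metric.sphere 0 ρ ⊆ Set.Icc 0 (2 * ρ) := by
    rintro d ⟨w, hw, rfl⟩
    rw [mem_sphere_zero_iff_norm] at hw
    refine ⟨norm_nonneg _, ?_⟩
    calc ‖(w : EuclideanSpace ℝ (Fin m)) - w0‖
        ≤ ‖(w : EuclideanSpace ℝ (Fin m))‖ + ‖w0‖ := norm_sub_le _ _
      _ = 2 * ρ := by rw [← hρdef, show ‖(w : EuclideanSpace ℝ (Fin m))‖ = ‖w‖ from rfl, hw]; ring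
  have hT : f '' Metric.sphere 0 ρ = Set.Icc 0 (2 * ρ) :=
    Set.Subset.antisymm hsubT (hTconn.isPreconnected.Icc_subset h0T h2T)
  have hLHS : (fun Q => dist Q (A 0)) ''
        {Q : EuclideanSpace ℝ (Fin m) | ∀ i : Fin (k + 2 + 1), i ≠ 0 → dist Q (A i) = u}
      = f '' Metric.sphere 0 ρ := by
    ext d
    simp only [Set.mem_image, Set.mem_setOf_eq]
    constructor
    · rintro ⟨Q, hQ, rfl⟩
      obtain ⟨horth, hnorm⟩ := (hchar Q).mp hQ
      refine ⟨⟨Q - g, (hmemD _).mpr horth⟩, ?_, ?_⟩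
      · rw [mem_sphere_zero_iff_norm]; exact hnorm
      · show ‖(Q - g) - w0‖ = dist Q (A 0)
        rw [hw0def, dist_eq_norm, sub_sub_sub_cancel_right]
    · rintro ⟨w, hw, rfl⟩
      rw [mem_sphere_zero_iff_norm] at hw
      refine ⟨g + (w : EuclideanSpace ℝ (Fin m)), ?_, ?_⟩
      · apply (hchar _).mpr
        have hQg : g + (w : EuclideanSpace ℝ (Fin m)) - g
            = (w : EuclideanSpace ℝ (Fin m)) := by abel
        exact ⟨fun i => by rw [hQg]; exact (hmemD _).mp w.2 i, by rw [hQg]; exact hw⟩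
      · show dist (g + (w : EuclideanSpace ℝ (Fin m))) (A 0) = f w
        rw [dist_eq_norm, hfdef]
        congr 1
        rw [hw0def]; abel
  rw [hLHS, hT]
  have hend : Real.sqrt (2 * (((k + 2 : ℕ) : ℝ) + 1) / ((k + 2 : ℕ) : ℝ)) * u = 2 * ρ := by
    have h4 : (2 * ρ) ^ 2
        = (2 * (((k + 2 : ℕ) : ℝ) + 1) / ((k + 2 : ℕ) : ℝ)) * u ^ 2 := by
      rw [mul_pow, hρ2]; push_cast; field_simp; ring
    have h5 : Real.sqrt ((2 * ρ) ^ 2) = 2 * ρ := Real.sqrt_sq (by positivity)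
    rw [← h5, h4, Real.sqrt_mul (by positivity), Real.sqrt_sq hu.le]
  rw [hend]
end

section
/- Let n ≥ 2 be an integer and let u, v > 0 be real numbers. There exist affinely independent points A_0, A_1,…,A_n in ℝ^n (n-dimensional Euclidean space) with ‖A_0 − A_1‖ = v and ‖A_i − A_j‖ = u for every other pair 0 ≤ i < j ≤ n, if and only if 0 < v/u < √(2n/(n−1)). -/
/-!
For weights `w` with `∑ wᵢ = 0`, the squared length of `∑ wᵢ Aᵢ` is `-½ ∑ wᵢ wⱼ |AᵢAⱼ|²`. When
every edge has length `u` except `A₀A₁`, of length `v`, this is half of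
`Q(w) = u² ∑ wᵢ² + 2 (u² - v²) w₀ w₁`, so the points are affinely independent exactly when `Q`
vanishes only at `w = 0` on the hyperplane `∑ wᵢ = 0`. Cauchy–Schwarz on the other `n - 1`
weights shows that it does when `(n - 1)v² < 2nu²`, and the weights `(-(n - 1), -(n - 1), 2, …, 2)`
give `Q = 2 (n - 1) (2nu² - (n - 1)v²)`. Points with these distances exist
as soon as `(n - 1)v² ≤ 2nu²`: put `A₂, …, Aₙ` at `u/√2` times the unit vectors `e₁, …, eₙ₋₁`
and `A₀, A₁` at `(±v/2, y, …, y)`, where `y` solves a quadratic of discriminant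
`2nu² - (n - 1)v²`.
-/

open Finset

section PreKite

variable {ι P : Type*} [MetricSpace P]

def IsPreKite (p : ι → P) (a b : ι) (u v : ℝ) : Prop :=
  dist (p a) (p b) = v ∧ ∀ i j, i ≠ j → s(i, j) ≠ s(a, b) → dist (p i) (p j) = u

variable {p : ι → P} {a b : ι} {u v : ℝ}

lemma isPreKite_iff_of_lt [LinearOrder ι] (hab : a < b) :
    IsPreKite p a b u v ↔
      dist (p a) (p b) = v ∧ ∀ i j, i < j → ¬(i = a ∧ j = b) → dist (p i) (p j) = u := by
  refine and_congr_right fun _ => ⟨fun hu i j hij hne => hu i j hij.ne ?_, fun hu i j hij hne => ?_⟩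
  · intro hs
    rcases Sym2.eq_iff.1 hs with h | ⟨rfl, rfl⟩
    exacts [hne h, lt_asymm hij hab]
  · rcases hij.lt_or_gt with h | h
    · exact hu i j h fun ⟨hi, hj⟩ => hne (by rw [hi, hj])
    · rw [dist_comm]
      exact hu j i h fun ⟨hj, hi⟩ => hne (by rw [hi, hj, Sym2.eq_swap])

lemma isPreKite_cons {n : ℕ} {x₀ x₁ : P} {q : Fin (n + 1) → P} (h01 : dist x₀ x₁ = v)
    (h0 : ∀ l ≠ 0, dist x₀ (q l) = u) (h1 : ∀ l ≠ 0, dist x₁ (q l) = u)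
    (hq : ∀ k l, k ≠ 0 → k ≠ l → dist (q k) (q l) = u) :
    IsPreKite (Fin.cons x₀ (Function.update q 0 x₁) : Fin (n + 2) → P) 0 1 u v := by
  refine (isPreKite_iff_of_lt Fin.zero_lt_one).2
    ⟨by rwa [← Fin.succ_zero_eq_one, Fin.cons_succ, Fin.cons_zero, Function.update_self],
      fun i j hij hne => ?_⟩
  obtain ⟨l, rfl⟩ := Fin.exists_succ_eq.2 (Fin.ne_zero_of_lt hij)
  obtain rfl | ⟨k, rfl⟩ := Fin.eq_zero_or_eq_succ i
  · have hl : l ≠ 0 := by rintro rfl; exact hne ⟨rfl, Fin.succ_zero_eq_one⟩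
    simpa [hl] using h0 l hl
  · have hkl : k < l := Fin.succ_lt_succ_iff.1 hij
    have hl : l ≠ 0 := Fin.ne_zero_of_lt hkl
    by_cases hk : k = 0
    · simpa [hk, hl] using h1 l hl
    · simpa [hk, hl] using hq k l hk hkl.ne

variable [DecidableEq ι]

lemma IsPreKite.dist_mul_self (hp : IsPreKite p a b u v) (hab : a ≠ b) (i j : ι) :
    dist (p i) (p j) * dist (p i) (p j) = u ^ 2 - (if i = j then u ^ 2 else 0) +
      ((if i = a ∧ j = b then v ^ 2 - u ^ 2 else 0) +
        (if i = b ∧ j = a then v ^ 2 - u ^ 2 else 0)) := by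
  obtain ⟨hv, hu⟩ := hp
  by_cases hij : i = j
  · subst hij
    have : ¬ (i = a ∧ i = b) := fun h => hab (h.1.symm.trans h.2)
    simp [this, and_comm]
  by_cases hpair : s(i, j) = s(a, b)
  · rcases Sym2.eq_iff.1 hpair with ⟨rfl, rfl⟩ | ⟨rfl, rfl⟩
    · simp [hab, hv, sq]
    · simp [hij, dist_comm (p i), hv, sq]
  · rw [hu i j hij hpair]
    have : ¬ (i = a ∧ j = b) ∧ ¬ (i = b ∧ j = a) := by
      simpa [Sym2.eq_iff] using hpair
    simp [hij, this, sq]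

variable [Fintype ι]

def preKiteForm (u v : ℝ) (a b : ι) (w : ι → ℝ) : ℝ :=
  u ^ 2 * ∑ i, w i ^ 2 + 2 * (u ^ 2 - v ^ 2) * (w a * w b)

lemma sum_eq_add_add_sum_compl_pair {M : Type*} [AddCommMonoid M] (hab : a ≠ b) (f : ι → M) :
    ∑ i, f i = f a + f b + ∑ i ∈ {a, b}ᶜ, f i := by
  rw [← sum_add_sum_compl {a, b} f, sum_pair hab]

lemma cast_card_compl_pair (hab : a ≠ b) :
    (#({a, b}ᶜ : Finset ι) : ℝ) = Fintype.card ι - 2 := by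
  have h2 : 2 ≤ Fintype.card ι := card_pair hab ▸ card_le_univ _
  rw [card_compl, card_pair hab, Nat.cast_sub h2, Nat.cast_two]

lemma sq_add_le_card_compl_pair_mul (hab : a ≠ b) {w : ι → ℝ} (hw : ∑ i, w i = 0) :
    (w a + w b) ^ 2 ≤ #({a, b}ᶜ : Finset ι) * ∑ i ∈ {a, b}ᶜ, w i ^ 2 := by
  have hrest : ∑ i ∈ {a, b}ᶜ, w i = -(w a + w b) := by
    rw [sum_eq_add_add_sum_compl_pair hab] at hw
    linarith
  rw [← neg_sq, ← hrest]
  exact sq_sum_le_card_mul_sum_sq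

lemma eq_zero_of_preKiteForm_eq_zero {u v : ℝ} (hab : a ≠ b) (hv : v ≠ 0)
    (h : (Fintype.card ι - 2) * v ^ 2 < 2 * (Fintype.card ι - 1) * u ^ 2) {w : ι → ℝ}
    (hw : ∑ i, w i = 0) (hQ : preKiteForm u v a b w = 0) : w = 0 := by
  set m : ℝ := ((#({a, b}ᶜ : Finset ι) : ℕ) : ℝ)
  set R := ∑ i ∈ {a, b}ᶜ, w i ^ 2
  have hmN : m = Fintype.card ι - 2 := cast_card_compl_pair hab
  have hm : 0 ≤ m := Nat.cast_nonneg _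
  have hR : 0 ≤ R := sum_nonneg fun i _ => sq_nonneg (w i)
  have hCS : (w a + w b) ^ 2 ≤ m * R := sq_add_le_card_compl_pair_mul hab hw
  have hQ' : u ^ 2 * (w a ^ 2 + w b ^ 2 + R) + 2 * (u ^ 2 - v ^ 2) * (w a * w b) = 0 := by
    rwa [preKiteForm, sum_eq_add_add_sum_compl_pair hab] at hQ
  -- `m Q = (w a + w b)² ((m + 1) u² - m v² / 2) + m v² (w a - w b)² / 2 + u² (m R - (w a + w b)²)`
  have hsum : w a + w b = 0 := by
    have : (w a + w b) ^ 2 * ((m + 1) * u ^ 2 - m * v ^ 2 / 2) ≤ 0 := by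
      nlinarith [mul_nonneg (mul_nonneg hm (sq_nonneg v)) (sq_nonneg (w a - w b)),
        mul_nonneg (sq_nonneg u) (sub_nonneg.2 hCS)]
    have hC : 0 < (m + 1) * u ^ 2 - m * v ^ 2 / 2 := by rw [hmN]; linarith
    exact pow_eq_zero_iff two_ne_zero |>.1 <|
      le_antisymm (nonpos_of_mul_nonpos_left this hC) (sq_nonneg _)
  have hb : w b = -w a := by linarith
  have hu : u ≠ 0 := by rintro rfl; nlinarith [sq_nonneg v]
  have hQa : 2 * v ^ 2 * w a ^ 2 + u ^ 2 * R = 0 := by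
    rw [hb] at hQ'
    linear_combination hQ'
  obtain ⟨hva, huR⟩ := (add_eq_zero_iff_of_nonneg (by positivity) (by positivity)).1 hQa
  have ha : w a = 0 := by simpa [hv] using hva
  have hrest : ∀ i ∈ ({a, b}ᶜ : Finset ι), w i = 0 := fun i hi => by
    simpa using (sum_eq_zero_iff_of_nonneg fun i _ => sq_nonneg (w i)).1
      ((mul_eq_zero.1 huR).resolve_left (pow_ne_zero 2 hu)) i hi
  funext i
  by_cases hia : i = a
  · rw [hia, ha, Pi.zero_apply]
  by_cases hib : i = b
  · rw [hib, hb, ha, neg_zero, Pi.zero_apply]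
  exact hrest i (by simp [hia, hib])

variable {V : Type*} [NormedAddCommGroup V] [InnerProductSpace ℝ V] [NormedAddTorsor V P]

lemma IsPreKite.norm_weightedVSub_sq (hp : IsPreKite p a b u v) (hab : a ≠ b) {w : ι → ℝ}
    (hw : ∑ i, w i = 0) : ‖univ.weightedVSub p w‖ ^ 2 = preKiteForm u v a b w / 2 := by
  rw [← real_inner_self_eq_norm_sq, EuclideanGeometry.inner_weightedVSub p hw p hw]
  simp only [hp.dist_mul_self hab, mul_add, mul_sub, sum_add_distrib, sum_sub_distrib, mul_ite,
    mul_zero, ite_and, sum_ite_eq, sum_ite_eq', sum_ite_irrel, sum_const_zero, mem_univ, if_true,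
    ← sum_mul, ← mul_sum, hw, preKiteForm, ← sq]
  ring

lemma IsPreKite.affineIndependent (hp : IsPreKite p a b u v) (hab : a ≠ b) (hv : v ≠ 0)
    (h : (Fintype.card ι - 2) * v ^ 2 < 2 * (Fintype.card ι - 1) * u ^ 2) :
    AffineIndependent ℝ p := by
  rw [affineIndependent_iff_of_fintype]
  intro w hw h0
  have hQ := hp.norm_weightedVSub_sq hab hw
  rw [h0, norm_zero, zero_pow two_ne_zero, eq_comm, div_eq_zero_iff] at hQ
  exact congrFun (eq_zero_of_preKiteForm_eq_zero hab hv h hw (hQ.resolve_right two_ne_zero))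

lemma IsPreKite.card_sub_two_mul_sq_lt (hp : IsPreKite p a b u v) (hab : a ≠ b)
    (hA : AffineIndependent ℝ p) (h3 : 2 < Fintype.card ι) :
    (Fintype.card ι - 2) * v ^ 2 < 2 * (Fintype.card ι - 1) * u ^ 2 := by
  rw [affineIndependent_iff_of_fintype] at hA
  set m : ℝ := ((#({a, b}ᶜ : Finset ι) : ℕ) : ℝ)
  have hmN : m = Fintype.card ι - 2 := cast_card_compl_pair hab
  have hm : 0 < m := by
    have : (2 : ℝ) < Fintype.card ι := by exact_mod_cast h3
    linarith
  obtain ⟨c, hc⟩ : ({a, b}ᶜ : Finset ι).Nonempty := card_pos.1 (Nat.cast_pos.1 hm)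
  -- `∑ wᵢ pᵢ` is `2m` times the vector from the midpoint of `p a, p b` to the centroid of the rest
  set w : ι → ℝ := fun i => if i ∈ ({a, b} : Finset ι) then -m else 2
  have hw2 : ∀ i ∈ ({a, b}ᶜ : Finset ι), w i = 2 := fun i hi => if_neg (mem_compl.1 hi)
  have hwa : w a = -m := if_pos (by simp)
  have hwb : w b = -m := if_pos (by simp)
  have hw : ∑ i, w i = 0 := by
    rw [sum_eq_add_add_sum_compl_pair hab, sum_congr rfl hw2, sum_const, nsmul_eq_mul, hwa, hwb]
    ring
  have hQ : preKiteForm u v a b w = 2 * m * (2 * (m + 1) * u ^ 2 - m * v ^ 2) := by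
    rw [preKiteForm, sum_eq_add_add_sum_compl_pair hab,
      sum_congr rfl fun i hi => by rw [hw2 i hi], sum_const, nsmul_eq_mul, hwa, hwb]
    ring
  have hne : univ.weightedVSub p w ≠ (0 : V) := fun h0 =>
    two_ne_zero (hw2 c hc ▸ hA w hw h0 c)
  have hpos : 0 < m * (2 * (m + 1) * u ^ 2 - m * v ^ 2) := by
    have := hp.norm_weightedVSub_sq hab hw
    rw [hQ] at this
    nlinarith [pow_pos (norm_pos_iff.2 hne) 2]
  have := pos_of_mul_pos_right hpos hm.le
  rw [hmN] at this
  linarith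

end PreKite

lemma exists_mul_sq_sub_two_mul_add_eq_zero (n : ℝ) {t c : ℝ} (ht : 0 < t) (hc : n * c ≤ t ^ 2) :
    ∃ y, n * y ^ 2 - 2 * t * y + c = 0 := by
  set s := √(t ^ 2 - n * c)
  have hs : s ^ 2 = t ^ 2 - n * c := Real.sq_sqrt (by linarith)
  have hts : 0 < t + s := add_pos_of_pos_of_nonneg ht (Real.sqrt_nonneg _)
  -- the root `(t - s) / n`, written so that `n = 0` needs no special case
  refine ⟨c / (t + s), (mul_eq_zero.1 (?_ : (t + s) ^ 2 * _ = 0)).resolve_left (by positivity)⟩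
  have hy : c / (t + s) * (t + s) = c := div_mul_cancel₀ _ hts.ne'
  linear_combination (n * (c / (t + s) * (t + s) + c) - 2 * t * (t + s)) * hy + c * hs

lemma EuclideanSpace.dist_single_sq {ι : Type*} [Fintype ι] [DecidableEq ι]
    (x : EuclideanSpace ℝ ι) (i : ι) (t : ℝ) :
    dist x (EuclideanSpace.single i t) ^ 2 = ‖x‖ ^ 2 - 2 * t * x i + t ^ 2 := by
  rw [dist_eq_norm, norm_sub_sq_real, EuclideanSpace.inner_single_right, PiLp.norm_single,
    Real.norm_eq_abs, sq_abs]
  simp only [conj_trivial]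
  ring

lemma exists_isPreKite (n : ℕ) {u v : ℝ} (hu : 0 < u) (hv : 0 ≤ v)
    (h : n * v ^ 2 ≤ 2 * (n + 1) * u ^ 2) :
    ∃ A : Fin (n + 1 + 1) → EuclideanSpace ℝ (Fin (n + 1)), IsPreKite A 0 1 u v := by
  set t := u / √2
  have ht : t ^ 2 = u ^ 2 / 2 := by rw [div_pow, Real.sq_sqrt zero_le_two]
  obtain ⟨y, hy⟩ := exists_mul_sq_sub_two_mul_add_eq_zero n (t := t) (c := v ^ 2 / 4 - u ^ 2 / 2)
    (by positivity) (by rw [ht]; linarith)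
  let P : ℝ → EuclideanSpace ℝ (Fin (n + 1)) := fun c =>
    WithLp.toLp 2 fun k => if k = 0 then c else y
  have hP : ∀ c, c ^ 2 = (v / 2) ^ 2 → ∀ l ≠ 0, dist (P c) (EuclideanSpace.single l t) = u := by
    intro c hc l hl
    have hnorm : ‖P c‖ ^ 2 = c ^ 2 + n * y ^ 2 := by
      simp [P, EuclideanSpace.real_norm_sq_eq, Fin.sum_univ_succ, Fin.succ_ne_zero]
    rw [← sq_eq_sq₀ dist_nonneg hu.le, EuclideanSpace.dist_single_sq, hnorm, hc]
    simp only [P, if_neg hl]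
    linear_combination hy + ht
  refine ⟨_, isPreKite_cons (x₀ := P (v / 2)) (x₁ := P (-(v / 2))) ?_ (hP _ rfl) (hP _ (neg_sq _))
    fun k l _ hkl => ?_⟩
  · rw [EuclideanSpace.dist_eq]
    simp [P, Fin.sum_univ_succ, Fin.succ_ne_zero]
    rw [Real.dist_eq, sub_neg_eq_add, add_halves, abs_of_nonneg hv]
  · rw [← sq_eq_sq₀ dist_nonneg hu.le, EuclideanSpace.dist_single_sq, PiLp.norm_single,
      Real.norm_eq_abs, sq_abs]
    simp [hkl]
    linear_combination 2 * ht

/-- There exists an `n`-simplex in `ℝⁿ` with one edge of length `v` and all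
remaining edges of length `u` if and only if `0 < v/u < √(2n/(n−1))`. -/
theorem stmt_13 (n : ℕ) (hn : 2 ≤ n) (u v : ℝ) (hu : 0 < u) (hv : 0 < v) :
    (∃ A : Fin (n + 1) → EuclideanSpace ℝ (Fin n),
      AffineIndependent ℝ A ∧
      dist (A 0) (A 1) = v ∧
      ∀ i j : Fin (n + 1), i < j → ¬(i = 0 ∧ j = 1) → dist (A i) (A j) = u) ↔
    (0 < v / u ∧ v / u < Real.sqrt (2 * (n : ℝ) / ((n : ℝ) - 1))) := by
  obtain ⟨m, rfl⟩ : ∃ m, n = m + 1 := ⟨n - 1, by omega⟩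
  have hm : (0 : ℝ) < m := by exact_mod_cast (by omega : 0 < m)
  have hcard : (Fintype.card (Fin (m + 1 + 1)) : ℝ) = m + 2 := by
    push_cast [Fintype.card_fin]; ring
  have hcond : v / u < √(2 * ((m + 1 : ℕ) : ℝ) / ((m + 1 : ℕ) - 1)) ↔
      m * v ^ 2 < 2 * (m + 1) * u ^ 2 := by
    push_cast
    rw [add_sub_cancel_right, Real.lt_sqrt (by positivity), div_pow,
      div_lt_div_iff₀ (by positivity) hm]
    constructor <;> intro h <;> linarith
  simp_rw [← isPreKite_iff_of_lt Fin.zero_lt_one, hcond]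
  constructor
  · rintro ⟨A, hA, hp⟩
    have := hp.card_sub_two_mul_sq_lt zero_ne_one hA (by simp; omega)
    exact ⟨div_pos hv hu, by rw [hcard] at this; linarith⟩
  · rintro ⟨-, h⟩
    obtain ⟨A, hp⟩ := exists_isPreKite m hu hv.le h.le
    exact ⟨A, hp.affineIndependent zero_ne_one hv.ne' (by rw [hcard]; linarith), hp⟩
end

section
/- Let n ≥ 2 and let S be an n-simplex with vertices A_0,…,A_n in a Euclidean space such that the facet {A_1,…,A_n} is regular (so S is an n-pre-kite with apex A_0). If the circumcenter of S coincides with the centroid of its vertices, then S is regular, i.e., all pairwise distances ‖A_i − A_j‖, 0 ≤ i < j ≤ n, are equal. -/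
/-!
If the centroid `G` is equidistant (at distance `R`) from all vertices, then, since the vectors
`Aⱼ - G` sum to zero, every vertex has the same sum of squared distances to the other vertices,
namely `2 (n + 1) R²`. For a vertex of the regular facet this sum is `dᵢ² + (n - 1) u²`, where
`dᵢ` is its distance to the apex, while for the apex it is `∑ᵢ dᵢ²`. Equating gives `dᵢ² = u²`.
-/

open Finset

theorem Finset.sum_vsub_centroid_eq_zero {k V P ι : Type*} [Field k] [CharZero k]
    [AddCommGroup V] [Module k V] [AddTorsor V P] {s : Finset ι} (hs : s.Nonempty)
    (p : ι → P) : ∑ i ∈ s, (p i -ᵥ s.centroid k p) = 0 := by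
  have hw := s.sum_centroidWeights_eq_one_of_nonempty k hs
  have h := s.sum_smul_vsub_const_eq_affineCombination_vsub (s.centroidWeights k) p
    (s.centroid k p) hw
  rw [← centroid_def, vsub_self] at h
  simp only [centroidWeights_apply, ← smul_sum] at h
  exact (smul_eq_zero.mp h).resolve_left (by simpa using hs.ne_empty)

theorem sum_dist_sq_eq_of_dist_centroid_eq {V P ι : Type*} [NormedAddCommGroup V]
    [InnerProductSpace ℝ V] [MetricSpace P] [NormedAddTorsor V P] [Fintype ι]
    (p : ι → P) {R : ℝ} (hR : ∀ i, dist (univ.centroid ℝ p) (p i) = R) (i : ι) :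
    ∑ j, dist (p i) (p j) ^ 2 = 2 * Fintype.card ι * R ^ 2 := by
  set G := univ.centroid ℝ p
  have hnorm : ∀ j, ‖p j -ᵥ G‖ = R := fun j => by rw [← dist_eq_norm_vsub, dist_comm, hR]
  have hdist : ∀ j, dist (p i) (p j) ^ 2 = 2 * R ^ 2 - 2 * inner ℝ (p i -ᵥ G) (p j -ᵥ G) := by
    intro j
    rw [dist_eq_norm_vsub V, ← vsub_sub_vsub_cancel_right _ _ G, norm_sub_sq_real, hnorm, hnorm]
    ring
  have hinner : ∑ j, inner ℝ (p i -ᵥ G) (p j -ᵥ G) = 0 := by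
    rw [← inner_sum, sum_vsub_centroid_eq_zero ⟨i, mem_univ i⟩, inner_zero_right]
  simp only [hdist, sum_sub_distrib, ← mul_sum, hinner, sum_const, card_univ, nsmul_eq_mul]
  ring

theorem sum_dist_sq_succ_of_facet_eq {P : Type*} [PseudoMetricSpace P] {n : ℕ}
    {A : Fin (n + 1) → P} {u : ℝ}
    (hfacet : ∀ i j : Fin (n + 1), i ≠ 0 → j ≠ 0 → i ≠ j → dist (A i) (A j) = u)
    (k : Fin n) :
    ∑ j, dist (A k.succ) (A j) ^ 2 = dist (A k.succ) (A 0) ^ 2 + (n - 1) * u ^ 2 := by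
  have hface : ∀ l ∈ univ.erase k, dist (A k.succ) (A l.succ) ^ 2 = u ^ 2 := fun l hl => by
    rw [hfacet _ _ (Fin.succ_ne_zero k) (Fin.succ_ne_zero l)
      (Fin.succ_injective _ |>.ne (ne_of_mem_erase hl).symm)]
  rw [Fin.sum_univ_succ, ← add_sum_erase _ _ (mem_univ k), sum_congr rfl hface, sum_const,
    card_erase_of_mem (mem_univ k), card_univ, Fintype.card_fin, nsmul_eq_mul, dist_self]
  rcases n with _ | n
  · exact k.elim0
  · push_cast; ring

theorem dist_apex_eq_of_sum_dist_sq_eq {P : Type*} [PseudoMetricSpace P] {n : ℕ} (hn : 2 ≤ n)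
    {A : Fin (n + 1) → P} {u S : ℝ}
    (hfacet : ∀ i j : Fin (n + 1), i ≠ 0 → j ≠ 0 → i ≠ j → dist (A i) (A j) = u)
    (hrow : ∀ i, ∑ j, dist (A i) (A j) ^ 2 = S) (k : Fin n) :
    dist (A k.succ) (A 0) = u := by
  have hedge : ∀ l : Fin n, dist (A l.succ) (A 0) ^ 2 = S - (n - 1) * u ^ 2 := fun l => by
    rw [← hrow l.succ, sum_dist_sq_succ_of_facet_eq hfacet]; ring
  have hapex : S = n * (S - (n - 1) * u ^ 2) := by
    conv_lhs => rw [← hrow 0, Fin.sum_univ_succ, dist_self]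
    simp only [dist_comm (A 0), hedge, sum_const, card_univ, Fintype.card_fin, nsmul_eq_mul]
    ring
  have hn1 : (n : ℝ) - 1 ≠ 0 := by
    have : (2 : ℝ) ≤ n := by exact_mod_cast hn
    linarith
  have hS : S = n * u ^ 2 := by
    have : ((n : ℝ) - 1) * (S - n * u ^ 2) = 0 := by linear_combination -hapex
    linarith [(mul_eq_zero.mp this).resolve_left hn1]
  have hu : 0 ≤ u := by
    rw [← hfacet ⟨1, by omega⟩ ⟨2, by omega⟩ (by simp [Fin.ext_iff]) (by simp [Fin.ext_iff])
      (by simp [Fin.ext_iff])]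
    exact dist_nonneg
  rw [← pow_left_inj₀ dist_nonneg hu two_ne_zero, hedge, hS]
  ring

theorem stmt_14_general {E : Type*} [NormedAddCommGroup E] [InnerProductSpace ℝ E]
    (n : ℕ) (hn : 2 ≤ n) (A : Fin (n + 1) → E) (u : ℝ)
    (hfacet : ∀ i j : Fin (n + 1), i ≠ 0 → j ≠ 0 → i ≠ j →
      dist (A i) (A j) = u)
    (hcc : ∃ R, ∀ i, dist (Finset.centroid ℝ Finset.univ A) (A i) = R) :
    ∃ c, ∀ i j : Fin (n + 1), i ≠ j → dist (A i) (A j) = c := by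
  obtain ⟨R, hR⟩ := hcc
  have hapex := dist_apex_eq_of_sum_dist_sq_eq hn hfacet (sum_dist_sq_eq_of_dist_centroid_eq A hR)
  refine ⟨u, fun i j hij => ?_⟩
  cases i using Fin.cases <;> cases j using Fin.cases
  · exact absurd rfl hij
  · rw [dist_comm]; exact hapex _
  · exact hapex _
  · exact hfacet _ _ (Fin.succ_ne_zero _) (Fin.succ_ne_zero _) hij

/-- An `n`-pre-kite whose circumcenter coincides with the centroid of its
vertices is regular. -/
theorem stmt_14 {E : Type*} [NormedAddCommGroup E] [InnerProductSpace ℝ E]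
    (n : ℕ) (hn : 2 ≤ n) (A : Fin (n + 1) → E) (u : ℝ)
    (hA : AffineIndependent ℝ A)
    (hfacet : ∀ i j : Fin (n + 1), i ≠ 0 → j ≠ 0 → i ≠ j →
      dist (A i) (A j) = u)
    (hcc : ∃ R, ∀ i, dist (Finset.centroid ℝ Finset.univ A) (A i) = R) :
    ∃ c, ∀ i j : Fin (n + 1), i ≠ j → dist (A i) (A j) = c :=
  stmt_14_general n hn A u hfacet hcc
end

section
/- Let n ≥ 3 and let A_0,…,A_n be the vertices of an n-simplex in a Euclidean space whose facet {A_1,…,A_n} is regular (an n-pre-kite with apex A_0). Suppose there exist positive real numbers β_0,…,β_n such that ‖A_i − A_j‖² = β_i² + β_i β_j + β_j² for all 0 ≤ i < j ≤ n (the characterization of tetra-isogonic n-simplices). Then β_1 = β_2 = ⋯ = β_n, and consequently ‖A_0 − A_1‖ = ‖A_0 − A_2‖ = ⋯ = ‖A_0 − A_n‖, i.e., S is a kite. (Thus for n ≥ 3 a tetra-isogonic n-pre-kite is an n-kite.) -/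
/-- A tetra-isogonic `n`-pre-kite (`n ≥ 3`) is a kite: if the squared edge
lengths satisfy `‖Aᵢ − Aⱼ‖² = βᵢ² + βᵢβⱼ + βⱼ²` for positive reals `β₀,…,βₙ`,
and the facet opposite the apex `A₀` is regular, then `β₁ = ⋯ = βₙ` and all the
edges emanating from the apex have the same length. -/
theorem stmt_18 {E : Type*} [NormedAddCommGroup E] [InnerProductSpace ℝ E]
    (n : ℕ) (hn : 3 ≤ n) (A : Fin (n + 1) → E) (u : ℝ)
    (hA : AffineIndependent ℝ A)
    (hfacet : ∀ i j : Fin (n + 1), i ≠ 0 → j ≠ 0 → i ≠ j →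
      dist (A i) (A j) = u)
    (β : Fin (n + 1) → ℝ) (hβ : ∀ i, 0 < β i)
    (hiso : ∀ i j : Fin (n + 1), i < j →
      dist (A i) (A j) ^ 2 = β i ^ 2 + β i * β j + β j ^ 2) :
    (∀ i j : Fin (n + 1), i ≠ 0 → j ≠ 0 → β i = β j) ∧
    (∀ i j : Fin (n + 1), i ≠ 0 → j ≠ 0 →
      dist (A 0) (A i) = dist (A 0) (A j)) := by
  -- squared-length equation on the facet
  have key : ∀ i j : Fin (n + 1), i ≠ 0 → j ≠ 0 → i ≠ j →
      β i ^ 2 + β i * β j + β j ^ 2 = u ^ 2 := by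
    intro i j hi hj hij
    rcases lt_or_gt_of_ne hij with h | h
    · rw [← hiso i j h, hfacet i j hi hj hij]
    · have := hiso j i h
      rw [hfacet j i hj hi (Ne.symm hij)] at this
      linarith
  have hbeta : ∀ i j : Fin (n + 1), i ≠ 0 → j ≠ 0 → β i = β j := by
    intro i j hi hj
    rcases eq_or_ne i j with rfl | hij
    · rfl
    -- find k ∉ {0, i, j}
    have : ∃ k : Fin (n + 1), k ∉ ({0, i, j} : Finset (Fin (n + 1))) := by
      by_contra h
      push_neg at h
      have hsub : (Finset.univ : Finset (Fin (n + 1))) ⊆ {0, i, j} :=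
        fun k _ => h k
      have hcard := Finset.card_le_card hsub
      have h3 : ({0, i, j} : Finset (Fin (n + 1))).card ≤ 3 := by
        apply le_trans (Finset.card_insert_le _ _)
        have := Finset.card_insert_le i ({j} : Finset (Fin (n + 1)))
        simp at this ⊢
        omega
      simp [Finset.card_univ] at hcard
      omega
    obtain ⟨k, hk⟩ := this
    simp [Finset.mem_insert] at hk
    obtain ⟨hk0, hki, hkj⟩ := hk
    have e1 := key k i hk0 hi hki
    have e2 := key k j hk0 hj hkj
    have hz : (β i - β j) * (β k + β i + β j) = 0 := by linear_combination e1 - e2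
    rcases mul_eq_zero.mp hz with h | h
    · linarith
    · have := hβ i; have := hβ j; have := hβ k; linarith
  refine ⟨hbeta, fun i j hi hj => ?_⟩
  have h0i : (0 : Fin (n + 1)) < i := Fin.pos_of_ne_zero hi
  have h0j : (0 : Fin (n + 1)) < j := Fin.pos_of_ne_zero hj
  have e1 := hiso 0 i h0i
  have e2 := hiso 0 j h0j
  have hb := hbeta i j hi hj
  have hsq : dist (A 0) (A i) ^ 2 = dist (A 0) (A j) ^ 2 := by
    rw [e1, e2, hb]
  nlinarith [dist_nonneg (x := A 0) (y := A i), dist_nonneg (x := A 0) (y := A j), hsq]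
end

section
/- Let n ≥ 3 and let A_0,…,A_n be the vertices of an n-simplex in a Euclidean space whose facet {A_1,…,A_n} is regular (an n-pre-kite with apex A_0). Suppose there exist positive real numbers β_0,…,β_n such that ‖A_i − A_j‖² = β_i β_j for all 0 ≤ i < j ≤ n (the characterization of isodynamic n-simplices). Then β_1 = β_2 = ⋯ = β_n, and consequently ‖A_0 − A_1‖ = ‖A_0 − A_2‖ = ⋯ = ‖A_0 − A_n‖, i.e., S is a kite. (Thus for n ≥ 3 an isodynamic n-pre-kite is an n-kite.) -/
/-- An isodynamic `n`-pre-kite (`n ≥ 3`) is a kite: if the squared edge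
lengths satisfy `‖Aᵢ − Aⱼ‖² = βᵢβⱼ` for positive reals `β₀,…,βₙ`, and the
facet opposite the apex `A₀` is regular, then `β₁ = ⋯ = βₙ` and all the edges
emanating from the apex have the same length. -/
theorem stmt_19 {E : Type*} [NormedAddCommGroup E] [InnerProductSpace ℝ E]
    (n : ℕ) (hn : 3 ≤ n) (A : Fin (n + 1) → E) (u : ℝ)
    (hA : AffineIndependent ℝ A)
    (hfacet : ∀ i j : Fin (n + 1), i ≠ 0 → j ≠ 0 → i ≠ j →
      dist (A i) (A j) = u)
    (β : Fin (n + 1) → ℝ) (hβ : ∀ i, 0 < β i)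
    (hiso : ∀ i j : Fin (n + 1), i < j →
      dist (A i) (A j) ^ 2 = β i * β j) :
    (∀ i j : Fin (n + 1), i ≠ 0 → j ≠ 0 → β i = β j) ∧
    (∀ i j : Fin (n + 1), i ≠ 0 → j ≠ 0 →
      dist (A 0) (A i) = dist (A 0) (A j)) := by
  have hiso' : ∀ i j : Fin (n + 1), i ≠ j →
      dist (A i) (A j) ^ 2 = β i * β j := by
    intro i j hij
    rcases lt_or_gt_of_ne hij with h | h
    · exact hiso i j h
    · rw [dist_comm, mul_comm]; exact hiso j i h
  have key : ∀ i j : Fin (n + 1), i ≠ 0 → j ≠ 0 → β i = β j := by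
    intro i j hi hj
    rcases eq_or_ne i j with rfl | hij
    · rfl
    have hcard : ({0, i, j} : Finset (Fin (n + 1))).card < (Finset.univ : Finset (Fin (n+1))).card := by
      have h3 : ({0, i, j} : Finset (Fin (n + 1))).card ≤ 3 := by
        apply le_trans (Finset.card_insert_le _ _)
        have := Finset.card_insert_le i ({j} : Finset (Fin (n + 1)))
        simp at this ⊢; omega
      have : (Finset.univ : Finset (Fin (n+1))).card = n + 1 := by simp
      omega
    have hex : ∃ k, k ∉ ({0, i, j} : Finset (Fin (n + 1))) := by
      by_contra h
      push_neg at h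
      have hsub : (Finset.univ : Finset (Fin (n+1))) ⊆ {0, i, j} := fun x _ => h x
      have := Finset.card_le_card hsub
      omega
    obtain ⟨k, hk⟩ := hex
    simp only [Finset.mem_insert, Finset.mem_singleton, not_or] at hk
    obtain ⟨hk0, hki, hkj⟩ := hk
    have h1 : β i * β k = β j * β k := by
      rw [← hiso' i k (Ne.symm hki), ← hiso' j k (Ne.symm hkj)]
      rw [hfacet i k hi hk0 (Ne.symm hki), hfacet j k hj hk0 (Ne.symm hkj)]
    exact mul_right_cancel₀ (hβ k).ne' h1
  refine ⟨key, fun i j hi hj => ?_⟩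
  have h0i : (0 : Fin (n + 1)) ≠ i := Ne.symm hi
  have h0j : (0 : Fin (n + 1)) ≠ j := Ne.symm hj
  have hsq : dist (A 0) (A i) ^ 2 = dist (A 0) (A j) ^ 2 := by
    rw [hiso' 0 i h0i, hiso' 0 j h0j, key i j hi hj]
  nlinarith [hsq, dist_nonneg (x := A 0) (y := A i), dist_nonneg (x := A 0) (y := A j)]
end
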